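/- arXiv:1911.06642 — 4 statements merged into one kernel-verified Lean document; each statement's English description precedes it below -/
import Mathlib

section
/- For every integer k ≥ 5 there exist a constant c > 0 and an integer n₀ such that for all n ≥ n₀ there is a simple graph G on n vertices together with a proper edge-coloring of G containing no rainbow copy of the path P_k, such that G contains at least c·n^⌊k/2⌋ copies of P_k. (Lower bound of Theorem 1.1: ex(n, P_k, rainbow-P_k) = Ω(n^⌊k/2⌋).) -/
open SimpleGraph

/-- A proper edge-coloring: distinct edges of `G` sharing a vertex get different colors. -/
def IsProperEdgeColoring {V β : Type*} (G : SimpleGraph V) (c : Sym2 V → β) : Prop :=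
  ∀ e₁ ∈ G.edgeSet, ∀ e₂ ∈ G.edgeSet, e₁ ≠ e₂ → (∃ v, v ∈ e₁ ∧ v ∈ e₂) → c e₁ ≠ c e₂

/-- `G`, with edge-coloring `c`, contains a rainbow copy of `H`:
a subgraph isomorphic to `H` all of whose edges get pairwise distinct colors. -/
def HasRainbowCopy {V W β : Type*} (G : SimpleGraph V) (c : Sym2 V → β)
    (H : SimpleGraph W) : Prop :=
  ∃ A : G.Subgraph, Nonempty (A.coe ≃g H) ∧ Set.InjOn c A.edgeSet

/-- The number of copies of `H` in `G`, i.e. the number of subgraphs of `G`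
isomorphic to `H`. -/
noncomputable def copyCount {V W : Type*} (G : SimpleGraph V) (H : SimpleGraph W) : ℕ :=
  Set.ncard {A : G.Subgraph | Nonempty (A.coe ≃g H)}

/-!
A vertex `x : Fin n` is read as the pair `(x % k, x / k)` of a layer and an index. In the hub
layers `1, 4, 6, 8, …` only the vertex `(j, 0)` has edges. Consecutive layers are completely
joined, except layers `2` and `3`, which are joined by the matching `(2, i) — (3, i)`. Choosing an index
in layer `0`, one in layers `2, 3` and one in each odd layer `≥ 5` gives `(n / k) ^ ⌊k/2⌋` copies
of `P_k`.

Matching edges get colour `0`; an edge at a hub gets the colour (lower layer, index of the other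
end), with layers `1` and `3` identified. A rainbow `P_k` has at most one matching edge, so at
least `k - 2` of its edges meet a hub; as there are only `⌊(k - 1)/2⌋` hubs, each on at most two
edges of the path, it passes through all of them, in particular through `(1, 0)` and `(4, 0)`.
Between these it is forced along `(1, 0), (2, i), (3, i), (4, 0)`, whose first and last edges
both get the colour `(1, i)`.
-/

open Finset Function

section General

variable {V W β : Type*}

theorem IsProperEdgeColoring.comap {G : SimpleGraph W} {c : Sym2 W → β} {f : V → W}
    (hf : Injective f) (h : IsProperEdgeColoring G c) :
    IsProperEdgeColoring (G.comap f) (c ∘ Sym2.map f) := by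
  have hmap : ∀ e ∈ (G.comap f).edgeSet, Sym2.map f e ∈ G.edgeSet :=
    fun e => Sym2.ind (fun _ _ he => he) e
  rintro e₁ he₁ e₂ he₂ hne ⟨v, hv₁, hv₂⟩
  exact h _ (hmap e₁ he₁) _ (hmap e₂ he₂) ((Sym2.map.injective hf).ne hne)
    ⟨f v, Sym2.mem_map.2 ⟨v, hv₁, rfl⟩, Sym2.mem_map.2 ⟨v, hv₂, rfl⟩⟩

theorem HasRainbowCopy.of_comap {X : Type*} {G : SimpleGraph W} {c : Sym2 W → β} {f : V → W}
    {H : SimpleGraph X} (hf : Injective f) (h : HasRainbowCopy (G.comap f) (c ∘ Sym2.map f) H) :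
    HasRainbowCopy G c H := by
  obtain ⟨A, ⟨φ⟩, hc⟩ := h
  let e : Copy (G.comap f) G := (Hom.comap f G).toCopy hf
  refine ⟨A.map e.toHom, ⟨(e.isoSubgraphMap A).symm.trans φ⟩, ?_⟩
  rw [Subgraph.edgeSet_map]
  rintro _ ⟨e₁, he₁, rfl⟩ _ ⟨e₂, he₂, rfl⟩ heq
  exact congrArg _ (hc he₁ he₂ heq)

def IsPathSeq (G : SimpleGraph V) (k : ℕ) (w : ℕ → V) : Prop :=
  Set.InjOn w (Set.Iio k) ∧ ∀ i, i + 1 < k → G.Adj (w i) (w (i + 1))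

def IsRainbowPathSeq (G : SimpleGraph V) (c : Sym2 V → β) (k : ℕ) (w : ℕ → V) : Prop :=
  IsPathSeq G k w ∧
    ∀ i j, i + 1 < k → j + 1 < k → c s(w i, w (i + 1)) = c s(w j, w (j + 1)) → i = j

namespace IsPathSeq

variable {G : SimpleGraph V} {k : ℕ} {w : ℕ → V}

theorem eq_of_edge_eq (hw : IsPathSeq G k w) {i j : ℕ} (hi : i + 1 < k) (hj : j + 1 < k)
    (h : s(w i, w (i + 1)) = s(w j, w (j + 1))) : i = j := by
  have hinj {a b : ℕ} (ha : a < k) (hb : b < k) (hab : w a = w b) : a = b := hw.1 ha hb hab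
  rcases Sym2.eq_iff.1 h with ⟨h₁, -⟩ | ⟨h₁, h₂⟩
  · exact hinj (by omega) (by omega) h₁
  · have := hinj (by omega) (by omega) h₁
    have := hinj (by omega) (by omega) h₂
    omega

theorem exists_adj (hw : IsPathSeq G k w) (hk : 2 ≤ k) {i : ℕ} (hi : i < k) :
    ∃ v, G.Adj (w i) v := by
  by_cases h : i + 1 < k
  · exact ⟨_, hw.2 i h⟩
  · refine ⟨w (i - 1), ?_⟩
    have := (hw.2 (i - 1) (by omega)).symm
    rwa [Nat.sub_add_cancel (by omega)] at this

theorem reverse (hw : IsPathSeq G k w) : IsPathSeq G k (fun i => w (k - 1 - i)) := by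
  refine ⟨fun i hi j hj h => ?_, fun i hi => ?_⟩
  · simp only [Set.mem_Iio] at hi hj
    have := hw.1 (show k - 1 - i < k by omega) (show k - 1 - j < k by omega) h
    omega
  · have := (hw.2 (k - 2 - i) (by omega)).symm
    rwa [show k - 2 - i + 1 = k - 1 - i by omega, show k - 2 - i = k - 1 - (i + 1) by omega]
      at this

end IsPathSeq

theorem IsRainbowPathSeq.reverse {G : SimpleGraph V} {c : Sym2 V → β} {k : ℕ} {w : ℕ → V}
    (hw : IsRainbowPathSeq G c k w) : IsRainbowPathSeq G c k (fun i => w (k - 1 - i)) := by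
  refine ⟨hw.1.reverse, fun i j hi hj h => ?_⟩
  have hrev {a : ℕ} (ha : a + 1 < k) :
      s(w (k - 1 - a), w (k - 1 - (a + 1))) = s(w (k - 2 - a), w (k - 2 - a + 1)) := by
    rw [Sym2.eq_swap, show k - 2 - a + 1 = k - 1 - a by omega,
      show k - 1 - (a + 1) = k - 2 - a by omega]
  rw [hrev hi, hrev hj] at h
  have := hw.2 _ _ (by omega) (by omega) h
  omega

theorem HasRainbowCopy.exists_isRainbowPathSeq [Nonempty V] {G : SimpleGraph V}
    {c : Sym2 V → β} {k : ℕ} (h : HasRainbowCopy G c (pathGraph k)) :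
    ∃ w, IsRainbowPathSeq G c k w := by
  obtain ⟨A, ⟨φ⟩, hc⟩ := h
  let w (i : ℕ) : V := if hi : i < k then (φ.symm ⟨i, hi⟩ : V) else Classical.arbitrary V
  have hw {i : ℕ} (hi : i < k) : w i = φ.symm ⟨i, hi⟩ := dif_pos hi
  have hadj (i : ℕ) (hi : i + 1 < k) : A.Adj (w i) (w (i + 1)) := by
    rw [hw (by omega), hw hi, ← Subgraph.coe_adj, φ.symm.map_adj_iff, pathGraph_adj]
    exact Or.inl rfl
  have hpath : IsPathSeq G k w := by
    refine ⟨fun i hi j hj h => ?_, fun i hi => A.adj_sub (hadj i hi)⟩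
    rw [hw hi, hw hj] at h
    exact Fin.val_eq_of_eq (φ.symm.injective (Subtype.ext h))
  exact ⟨w, hpath, fun i j hi hj h =>
    hpath.eq_of_edge_eq hi hj (hc (hadj i hi) (hadj j hj) h)⟩

theorem card_filter_or_succ_le (P : V → Prop) [DecidablePred P] (w : ℕ → V) (k : ℕ) :
    #{i ∈ range (k - 1) | P (w i) ∨ P (w (i + 1))} ≤ 2 * #{i ∈ range k | P (w i)} := by
  rw [filter_or, two_mul]
  refine (card_union_le _ _).trans (add_le_add ?_ ?_)
  · exact card_le_card (filter_subset_filter _ (range_subset_range.2 (Nat.sub_le k 1)))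
  · refine card_le_card_of_injOn (· + 1) (fun i hi => ?_) (fun _ _ _ _ h => Nat.succ_injective h)
    simp only [coe_filter, mem_range, Set.mem_ofPred_eq] at hi ⊢
    exact ⟨by omega, hi.2⟩

def pathGraphCopy {G : SimpleGraph V} {k : ℕ} (f : Fin k → V) (hf : Injective f)
    (hadj : ∀ i j : Fin k, i.val + 1 = j.val → G.Adj (f i) (f j)) : Copy (pathGraph k) G :=
  Hom.toCopy ⟨f, fun {i j} h => (pathGraph_adj.1 h).elim (hadj i j) fun h => (hadj j i h).symm⟩ hf

theorem card_le_copyCount_pathGraph [Finite V] {ι : Type*} {G : SimpleGraph V} {k : ℕ}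
    (F : ι → Fin k → V) (hinj : ∀ v, Injective (F v))
    (hadj : ∀ v (i j : Fin k), i.val + 1 = j.val → G.Adj (F v i) (F v j))
    (hF : Injective fun v => Set.range (F v)) :
    Nat.card ι ≤ _root_.copyCount G (pathGraph k) := by
  let S (v : ι) : G.Subgraph := (pathGraphCopy (F v) (hinj v) (hadj v)).toSubgraph
  have hS : Injective S := fun v v' h => hF (by
    simpa [S, pathGraphCopy] using congrArg Subgraph.verts h)
  have hsub : Set.range S ⊆ {A : G.Subgraph | Nonempty (A.coe ≃g pathGraph k)} := by
    rintro _ ⟨v, rfl⟩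
    exact ⟨(Copy.isoToSubgraph _).symm⟩
  rw [← Nat.card_range_of_injective hS, Nat.card_coe_set_eq]
  exact Set.ncard_le_ncard hsub (Set.toFinite _)

end General

section Core

def IsHub (j : ℕ) : Prop := j = 1 ∨ (4 ≤ j ∧ j % 2 = 0)

instance : DecidablePred IsHub := fun _ => inferInstanceAs (Decidable (_ ∨ _))

def IsCoreVertex (k : ℕ) (p : ℕ × ℕ) : Prop := p.1 < k ∧ (IsHub p.1 → p.2 = 0)

def coreStep (k : ℕ) (p q : ℕ × ℕ) : Prop :=
  q.1 = p.1 + 1 ∧ IsCoreVertex k p ∧ IsCoreVertex k q ∧ (p.1 = 2 → q.2 = p.2)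

def coreGraph (k : ℕ) : SimpleGraph (ℕ × ℕ) where
  Adj p q := coreStep k p q ∨ coreStep k q p
  symm := ⟨fun _ _ => Or.symm⟩
  loopless := ⟨fun _ h => h.elim (fun h => by have := h.1; omega) fun h => by have := h.1; omega⟩

def colorLabel (j : ℕ) : ℕ := if j = 3 then 1 else j

-- On a hub edge, `p.2 + q.2` is the index of the end outside the hub layer.
def coreColor : Sym2 (ℕ × ℕ) → ℕ :=
  Sym2.lift ⟨fun p q => if min p.1 q.1 = 2 then 0
    else Nat.pair (colorLabel (min p.1 q.1)) (p.2 + q.2) + 1,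
    fun p q => by simp only [min_comm, add_comm]⟩

variable {k : ℕ} {p q : ℕ × ℕ}

theorem isCoreVertex_of_adj (h : (coreGraph k).Adj p q) : IsCoreVertex k p :=
  h.elim (fun h => h.2.1) fun h => h.2.2.1

theorem exists_coreStep_of_mem_edgeSet {e : Sym2 (ℕ × ℕ)} (he : e ∈ (coreGraph k).edgeSet) :
    ∃ p q, coreStep k p q ∧ e = s(p, q) := by
  induction e using Sym2.ind with
  | h p q => exact he.elim (fun h => ⟨p, q, h, rfl⟩) fun h => ⟨q, p, h, Sym2.eq_swap⟩

theorem coreColor_of_coreStep (h : coreStep k p q) :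
    coreColor s(p, q) =
      if p.1 = 2 then 0 else Nat.pair (colorLabel p.1) (p.2 + q.2) + 1 := by
  simp [coreColor, h.1]

theorem coreColor_eq_zero (h : (coreGraph k).Adj p q) (hp : ¬IsHub p.1) (hq : ¬IsHub q.1) :
    coreColor s(p, q) = 0 := by
  unfold IsHub at hp hq
  rcases h with h | h
  · rw [coreColor_of_coreStep h, if_pos (by have := h.1; omega)]
  · rw [Sym2.eq_swap, coreColor_of_coreStep h, if_pos (by have := h.1; omega)]

/- Two matching edges at a common vertex coincide, as no layer next to `2` or `3` is matched. A
hub edge is determined by its colour, except that layers `1` and `3` share colours; but edges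
between layers `1, 2` and between layers `3, 4` are disjoint. -/
theorem eq_of_coreStep_of_coreColor_eq {p' q' v : ℕ × ℕ} (h : coreStep k p q)
    (h' : coreStep k p' q') (hc : coreColor s(p, q) = coreColor s(p', q'))
    (hv : v ∈ s(p, q)) (hv' : v ∈ s(p', q')) : p = p' ∧ q = q' := by
  rw [coreColor_of_coreStep h, coreColor_of_coreStep h'] at hc
  obtain ⟨a, i⟩ := p; obtain ⟨b, j⟩ := q; obtain ⟨a', i'⟩ := p'; obtain ⟨b', j'⟩ := q'
  obtain ⟨x, y⟩ := v
  simp only [coreStep, IsCoreVertex, IsHub] at h h'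
  simp only [colorLabel] at hc
  simp only [Sym2.mem_iff, Prod.mk.injEq] at hv hv' ⊢
  split_ifs at hc <;> simp only [Nat.pair_eq_pair, Nat.add_right_cancel_iff] at hc <;> omega

theorem coreColor_isProper (k : ℕ) : IsProperEdgeColoring (coreGraph k) coreColor := by
  rintro e₁ he₁ e₂ he₂ hne ⟨v, hv₁, hv₂⟩ hc
  obtain ⟨p, q, h, rfl⟩ := exists_coreStep_of_mem_edgeSet he₁
  obtain ⟨p', q', h', rfl⟩ := exists_coreStep_of_mem_edgeSet he₂
  obtain ⟨rfl, rfl⟩ := eq_of_coreStep_of_coreColor_eq h h' hc hv₁ hv₂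
  exact hne rfl

theorem two_mul_card_hub_le (hk : 3 ≤ k) : 2 * #{j ∈ range k | IsHub j} ≤ k - 1 := by
  have : #{j ∈ range k | IsHub j} ≤ #(range ((k - 1) / 2)) := by
    refine card_le_card_of_injOn (· / 2 - 1) (fun j hj => ?_) (fun i hi j hj h => ?_)
    · simp only [mem_coe, mem_filter, mem_range] at hj ⊢
      unfold IsHub at hj
      omega
    · simp only [mem_coe, mem_filter, mem_range] at hi hj h
      unfold IsHub at hi hj
      omega
  rw [card_range] at this
  omega

theorem eq_one_zero_of_adj_layer_zero {i : ℕ} (h : (coreGraph k).Adj (0, i) q) : q = (1, 0) := by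
  obtain ⟨b, j⟩ := q
  rcases h with ⟨h₁, -, ⟨-, h₄⟩, -⟩ | ⟨h₁, -⟩ <;> simp_all [IsHub]

theorem layer_eq_of_adj_one_zero (h : (coreGraph k).Adj (1, 0) q) : q.1 = 0 ∨ q.1 = 2 := by
  rcases h with ⟨h₁, -⟩ | ⟨h₁, -⟩ <;> dsimp only at h₁ <;> omega

theorem eq_of_adj_layer_two {i : ℕ} (h : (coreGraph k).Adj (2, i) q) : q = (1, 0) ∨ q = (3, i) := by
  obtain ⟨b, j⟩ := q
  rcases h with ⟨h₁, -, -, h₅⟩ | ⟨h₁, ⟨-, h₃⟩, -, -⟩ <;> simp_all [IsHub]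

theorem eq_of_adj_layer_three {i : ℕ} (h : (coreGraph k).Adj (3, i) q) :
    q = (2, i) ∨ q = (4, 0) := by
  obtain ⟨b, j⟩ := q
  rcases h with ⟨h₁, -, ⟨-, h₄⟩, -⟩ | ⟨h₁, -, -, h₅⟩ <;> simp_all [IsHub]

theorem IsPathSeq.exists_eq_hub {w : ℕ → ℕ × ℕ} (hw : IsPathSeq (coreGraph k) k w) (hk : 3 ≤ k)
    (hmatch : #{i ∈ range (k - 1) | ¬(IsHub (w i).1 ∨ IsHub (w (i + 1)).1)} ≤ 1)
    {j : ℕ} (hj : IsHub j) (hjk : j < k) : ∃ a < k, w a = (j, 0) := by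
  by_contra! hno
  have hvert {i : ℕ} (hi : i < k) : IsCoreVertex k (w i) :=
    isCoreVertex_of_adj (hw.exists_adj (by omega) hi).choose_spec
  have hvisit : #{i ∈ range k | IsHub (w i).1} ≤ #({j ∈ range k | IsHub j}.erase j) := by
    refine card_le_card_of_injOn (fun i => (w i).1) (fun i hi => ?_) (fun i hi i' hi' h => ?_)
    · rw [mem_coe, mem_filter, mem_range] at hi
      rw [mem_coe, mem_erase, mem_filter, mem_range]
      exact ⟨fun h => hno i hi.1 (Prod.ext h ((hvert hi.1).2 hi.2)), (hvert hi.1).1, hi.2⟩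
    · rw [mem_coe, mem_filter, mem_range] at hi hi'
      exact hw.1 hi.1 hi'.1 (Prod.ext h (by rw [(hvert hi.1).2 hi.2, (hvert hi'.1).2 hi'.2]))
  have herase : #({j ∈ range k | IsHub j}.erase j) + 1 = #{j ∈ range k | IsHub j} :=
    card_erase_add_one (mem_filter.2 ⟨mem_range.2 hjk, hj⟩)
  have hsplit := card_filter_add_card_filter_not (s := range (k - 1))
    (fun i => IsHub (w i).1 ∨ IsHub (w (i + 1)).1)
  have hmeet := card_filter_or_succ_le (fun v : ℕ × ℕ => IsHub v.1) w k
  have hhubs := two_mul_card_hub_le hk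
  rw [card_range] at hsplit
  omega

theorem IsPathSeq.coreColor_eq_of_lt {w : ℕ → ℕ × ℕ} (hw : IsPathSeq (coreGraph k) k w)
    {a b : ℕ} (ha : w a = (1, 0)) (hb : w b = (4, 0)) (hab : a < b) (hbk : b < k) :
    a + 3 < k ∧ coreColor s(w a, w (a + 1)) = coreColor s(w (a + 2), w (a + 3)) := by
  have hinj {i j : ℕ} (hi : i < k) (hj : j < k) (h : w i = w j) : i = j := hw.1 hi hj h
  have h₁ := hw.2 a (by omega)
  rw [ha] at h₁
  rcases layer_eq_of_adj_one_zero h₁ with h₁ | h₁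
  · have hb₁ : b ≠ a + 1 := by rintro rfl; simp [hb] at h₁
    have h₂ := hw.2 (a + 1) (by omega)
    rw [show w (a + 1) = (0, (w (a + 1)).2) from Prod.ext h₁ rfl] at h₂
    have := hinj (by omega) (by omega) ((eq_one_zero_of_adj_layer_zero h₂).trans ha.symm)
    omega
  · have hw₁ : w (a + 1) = (2, (w (a + 1)).2) := Prod.ext h₁ rfl
    have hb₁ : b ≠ a + 1 := by rintro rfl; simp [hb] at h₁
    have h₂ := hw.2 (a + 1) (by omega)
    rw [hw₁] at h₂
    have hw₂ : w (a + 2) = (3, (w (a + 1)).2) := (eq_of_adj_layer_two h₂).resolve_left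
      fun h => absurd (hinj (by omega) (by omega) (h.trans ha.symm)) (by omega)
    have hb₂ : b ≠ a + 2 := by rintro rfl; simp [hb] at hw₂
    have h₃ := hw.2 (a + 2) (by omega)
    rw [hw₂] at h₃
    have hw₃ : w (a + 3) = (4, 0) := (eq_of_adj_layer_three h₃).resolve_left
      fun h => absurd (hinj (by omega) (by omega) (h.trans hw₁.symm)) (by omega)
    refine ⟨by omega, ?_⟩
    rw [ha, hw₁, hw₂, hw₃]
    simp [coreColor, colorLabel]

theorem IsRainbowPathSeq.card_matching_le_one {w : ℕ → ℕ × ℕ}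
    (hw : IsRainbowPathSeq (coreGraph k) coreColor k w) :
    #{i ∈ range (k - 1) | ¬(IsHub (w i).1 ∨ IsHub (w (i + 1)).1)} ≤ 1 := by
  refine card_le_one.2 fun i hi j hj => ?_
  rw [mem_filter, mem_range, not_or] at hi hj
  refine hw.2 i j (by omega) (by omega) ?_
  rw [coreColor_eq_zero (hw.1.2 i (by omega)) hi.2.1 hi.2.2,
    coreColor_eq_zero (hw.1.2 j (by omega)) hj.2.1 hj.2.2]

theorem IsRainbowPathSeq.lt_of_eq_hub {w : ℕ → ℕ × ℕ}
    (hw : IsRainbowPathSeq (coreGraph k) coreColor k w) {a b : ℕ} (ha : w a = (1, 0))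
    (hb : w b = (4, 0)) (hbk : b < k) : b < a := by
  by_contra! hba
  have hab : a < b := hba.lt_of_ne (by rintro rfl; simp [ha] at hb)
  obtain ⟨h₃, hc⟩ := hw.1.coreColor_eq_of_lt ha hb hab hbk
  have := hw.2 a (a + 2) (by omega) (by omega) hc
  omega

theorem not_isRainbowPathSeq_coreGraph (hk : 5 ≤ k) (w : ℕ → ℕ × ℕ) :
    ¬IsRainbowPathSeq (coreGraph k) coreColor k w := by
  intro hw
  have hvisit {j : ℕ} (hj : IsHub j) (hjk : j < k) : ∃ a < k, w a = (j, 0) :=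
    hw.1.exists_eq_hub (by omega) hw.card_matching_le_one hj hjk
  obtain ⟨a, ha, hwa⟩ := hvisit (Or.inl rfl) (by omega)
  obtain ⟨b, hb, hwb⟩ := hvisit (Or.inr ⟨le_rfl, rfl⟩) (by omega)
  have hba := hw.lt_of_eq_hub hwa hwb hb
  have hab := hw.reverse.lt_of_eq_hub (a := k - 1 - a) (b := k - 1 - b)
    (by rwa [Nat.sub_sub_self (by omega)]) (by rwa [Nat.sub_sub_self (by omega)]) (by omega)
  omega

end Core

section Blocks

-- The path chosen by `v` has index `v 0, v 1, v 1, v 2, v 3, …` in layers `0, 2, 3, 5, 7, …`.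
def blockIndex {t m : ℕ} (v : Fin t → Fin m) (j : ℕ) : ℕ :=
  if h : IsHub j ∨ t ≤ j / 2 then 0 else v ⟨j / 2, by omega⟩

def blockLayer (b : ℕ) : ℕ := if b = 0 then 0 else 2 * b + 1

variable {t m : ℕ} (v : Fin t → Fin m)

theorem blockIndex_lt (ht : 0 < t) (j : ℕ) : blockIndex v j < m := by
  unfold blockIndex
  split
  exacts [(v ⟨0, ht⟩).pos, (v _).isLt]

theorem blockIndex_of_isHub {j : ℕ} (h : IsHub j) : blockIndex v j = 0 := dif_pos (Or.inl h)

theorem blockIndex_three : blockIndex v 3 = blockIndex v 2 := by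
  simp [blockIndex, IsHub]

theorem blockIndex_blockLayer (b : Fin t) : blockIndex v (blockLayer b) = v b := by
  have hb : blockLayer b / 2 = b := by unfold blockLayer; split <;> omega
  have hhub : ¬IsHub (blockLayer b) := by unfold blockLayer IsHub; split <;> omega
  rw [blockIndex, dif_neg (not_or.2 ⟨hhub, by omega⟩)]
  simp only [hb]

end Blocks

theorem add_mul_lt_of_lt_div {j i k n : ℕ} (hj : j < k) (hi : i < n / k) : j + k * i < n := by
  have := (Nat.le_div_iff_mul_le (by omega)).1 hi
  nlinarith

theorem le_two_mul_mul_div {k n : ℕ} (hk : 0 < k) (hkn : k ≤ n) : n ≤ 2 * k * (n / k) := by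
  have h₁ := Nat.lt_div_mul_add (a := n) hk
  have h₂ : k ≤ n / k * k := Nat.le_mul_of_pos_left k (Nat.div_pos hkn hk)
  linarith

def layerIndex (k : ℕ) {n : ℕ} (x : Fin n) : ℕ × ℕ := (x % k, x / k)

theorem layerIndex_injective (k n : ℕ) : Injective (layerIndex k : Fin n → ℕ × ℕ) := by
  intro x y h
  simp only [layerIndex, Prod.mk.injEq] at h
  ext
  rw [← Nat.mod_add_div x k, ← Nat.mod_add_div y k, h.1, h.2]

theorem pow_le_copyCount_comap_coreGraph {k : ℕ} (hk : 5 ≤ k) (n : ℕ) :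
    (n / k) ^ (k / 2) ≤
      _root_.copyCount ((coreGraph k).comap (layerIndex k : Fin n → ℕ × ℕ)) (pathGraph k) := by
  let F (v : Fin (k / 2) → Fin (n / k)) (j : Fin k) : Fin n :=
    ⟨j + k * blockIndex v j, add_mul_lt_of_lt_div j.isLt (blockIndex_lt v (by omega) j)⟩
  have hF (v : Fin (k / 2) → Fin (n / k)) (j : Fin k) :
      layerIndex k (F v j) = ((j : ℕ), blockIndex v j) := by
    simp [layerIndex, F, Nat.add_mul_div_left _ _ (by omega : 0 < k), Nat.mod_eq_of_lt j.isLt,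
      Nat.div_eq_of_lt j.isLt]
  have hinj (v) : Injective (F v) := fun i j h => by
    have := congrArg (layerIndex k) h
    rw [hF, hF, Prod.mk.injEq] at this
    exact Fin.ext this.1
  have hadj (v) (i j : Fin k) (hij : i.val + 1 = j.val) :
      ((coreGraph k).comap (layerIndex k)).Adj (F v i) (F v j) := by
    rw [comap_adj, hF, hF]
    refine Or.inl ⟨hij.symm, ⟨i.isLt, blockIndex_of_isHub v⟩, ⟨j.isLt, blockIndex_of_isHub v⟩,
      fun h => ?_⟩
    simp only at h ⊢
    rw [show (j : ℕ) = 3 by omega, h, blockIndex_three]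
  have hrange : Injective fun v => Set.range (F v) := by
    intro v v' h
    funext b
    have hb : blockLayer b < k := by unfold blockLayer; split <;> omega
    obtain ⟨j, hj⟩ : F v ⟨blockLayer b, hb⟩ ∈ Set.range (F v') := by
      simp only at h
      exact h ▸ ⟨_, rfl⟩
    have := congrArg (layerIndex k) hj
    rw [hF, hF, Prod.mk.injEq] at this
    rw [Fin.ext_iff, ← blockIndex_blockLayer v, ← blockIndex_blockLayer v', ← this.2, this.1]
  simpa using card_le_copyCount_pathGraph F hinj hadj hrange

/-- Lower bound of Theorem 1.1: ex(n, P_k, rainbow-P_k) = Ω(n^⌊k/2⌋). -/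
theorem path_rainbow_lower (k : ℕ) (hk : 5 ≤ k) :
    ∃ c : ℝ, 0 < c ∧ ∃ n₀ : ℕ, ∀ n ≥ n₀,
      ∃ (G : SimpleGraph (Fin n)) (col : Sym2 (Fin n) → ℕ),
        IsProperEdgeColoring G col ∧ ¬ HasRainbowCopy G col (pathGraph k) ∧
        c * (n : ℝ) ^ (k / 2) ≤ (_root_.copyCount G (pathGraph k) : ℝ) := by
  refine ⟨(2 * k : ℝ)⁻¹ ^ (k / 2), by positivity, k, fun n hn => ?_⟩
  have hπ := layerIndex_injective k n
  refine ⟨(coreGraph k).comap (layerIndex k), coreColor ∘ Sym2.map (layerIndex k),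
    (coreColor_isProper k).comap hπ, fun h => ?_, ?_⟩
  · obtain ⟨w, hw⟩ := (h.of_comap hπ).exists_isRainbowPathSeq
    exact not_isRainbowPathSeq_coreGraph hk w hw
  · have hn : (n : ℝ) ≤ 2 * k * (n / k : ℕ) := by
      exact_mod_cast le_two_mul_mul_div (by omega) hn
    calc (2 * k : ℝ)⁻¹ ^ (k / 2) * (n : ℝ) ^ (k / 2) = ((2 * k : ℝ)⁻¹ * n) ^ (k / 2) :=
          (mul_pow _ _ _).symm
      _ ≤ ((n / k : ℕ) : ℝ) ^ (k / 2) := by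
          gcongr
          rw [inv_mul_le_iff₀ (by positivity)]
          exact hn
      _ ≤ _ := by exact_mod_cast pow_le_copyCount_comap_coreGraph hk n
end

section
/- For every integer k ≥ 5 there exists a constant C such that for all n, every simple graph G on n vertices that admits a proper edge-coloring with no rainbow copy of the path P_k contains at most C·n^⌊k/2⌋ copies of P_k. (Upper bound of Theorem 1.1: ex(n, P_k, rainbow-P_k) = O(n^⌊k/2⌋).) -/
open SimpleGraph

section

variable {V W β : Type*}

namespace IsProperEdgeColoring

variable {G : SimpleGraph V} {col : Sym2 V → β}

theorem eq_of_color_eq (hc : IsProperEdgeColoring G col) {u v w : V} (hv : G.Adj u v)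
    (hw : G.Adj u w) (h : col s(u, v) = col s(u, w)) : v = w := by
  by_contra hvw
  exact hc _ hv _ hw (fun he ↦ hvw (Sym2.congr_right.mp he)) ⟨u, by simp, by simp⟩ h

theorem notMem_of_color_eq {H : SimpleGraph W} (hc : IsProperEdgeColoring G col)
    (f : Copy H G) {e e' : Sym2 W} (he : e ∈ H.edgeSet) (he' : e' ∈ H.edgeSet) (hne : e ≠ e')
    (h : col (e.map f) = col (e'.map f)) {i : W} (hi : i ∈ e) : i ∉ e' := fun hi' ↦
  hc _ (f.toHom.map_mem_edgeSet he) _ (f.toHom.map_mem_edgeSet he')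
    (fun heq ↦ hne (Sym2.map.injective f.injective heq))
    ⟨f i, Sym2.mem_map.mpr ⟨i, hi, rfl⟩, Sym2.mem_map.mpr ⟨i, hi', rfl⟩⟩ h

/-- `f i` is the unique neighbour of the image of the other endpoint of `e` along the colour
of `e'`, and that data does not involve `i`. -/
theorem apply_eq_of_forall_ne {H : SimpleGraph W} (hc : IsProperEdgeColoring G col)
    {f g : H →g G} {e e' : Sym2 W} (he : e ∈ H.edgeSet) {i : W} (hi : i ∈ e) (hi' : i ∉ e')
    (hfg : ∀ w, w ≠ i → f w = g w) (hf : col (e.map f) = col (e'.map f))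
    (hg : col (e.map g) = col (e'.map g)) : f i = g i := by
  obtain ⟨j, rfl⟩ := Sym2.mem_iff_exists.mp hi
  have hji : j ≠ i := (H.ne_of_adj he).symm
  have he'fg : e'.map f = e'.map g :=
    Sym2.map_congr fun w hw ↦ hfg w fun hwi ↦ hi' (hwi ▸ hw)
  refine hc.eq_of_color_eq (f.map_adj he).symm ((hfg j hji).symm ▸ (g.map_adj he).symm) ?_
  simpa only [Sym2.map_mk, Sym2.eq_swap, hfg j hji, he'fg, ← hg] using hf

end IsProperEdgeColoring

theorem SimpleGraph.Copy.hasRainbowCopy {G : SimpleGraph V} {H : SimpleGraph W}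
    {col : Sym2 V → β} (f : Copy H G) (h : Set.InjOn (col ∘ Sym2.map f) H.edgeSet) :
    HasRainbowCopy G col H :=
  ⟨f.toSubgraph, ⟨f.isoToSubgraph.symm⟩, by
    simpa only [Subgraph.edgeSet_map, Subgraph.edgeSet_top, Copy.coe_toHom] using h.image_of_comp⟩

theorem SimpleGraph.Walk.IsPath.hasRainbowCopy {G : SimpleGraph V} {col : Sym2 V → β}
    {u v : V} {w : G.Walk u v} (hw : w.IsPath) (h : (w.edges.map col).Nodup) :
    HasRainbowCopy G col (pathGraph (w.length + 1)) := by
  classical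
  exact ⟨w.toSubgraph, ⟨hw.pathGraphIsoToSubgraph.symm⟩, by
    rw [Walk.edgeSet_toSubgraph]
    exact fun x hx y hy ↦ List.inj_on_of_nodup_map h hx hy⟩

theorem hasRainbowCopy_pathGraph_zero (G : SimpleGraph V) (col : Sym2 V → β) :
    HasRainbowCopy G col (pathGraph 0) :=
  Copy.hasRainbowCopy ⟨⟨Fin.elim0, fun {a} ↦ a.elim0⟩, fun a ↦ a.elim0⟩
    (Set.subsingleton_of_subsingleton.injOn _)

theorem copyCount_eq_simpleGraph_copyCount [Fintype V] (G : SimpleGraph V) (H : SimpleGraph W) :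
    _root_.copyCount G H = G.copyCount H := by
  classical
  rw [_root_.copyCount, SimpleGraph.copyCount, ← Set.ncard_coe_finset]
  congr 1
  ext A
  simpa using ⟨fun ⟨e⟩ ↦ ⟨e.symm⟩, fun ⟨e⟩ ↦ ⟨e.symm⟩⟩

theorem copyCount_le_natCard_copy [Fintype V] [Fintype W] (G : SimpleGraph V)
    (H : SimpleGraph W) : _root_.copyCount G H ≤ Nat.card (Copy H G) := by
  classical
  rw [copyCount_eq_simpleGraph_copyCount, Nat.card_eq_fintype_card]
  exact copyCount_le_labelledCopyCount

/-- Removing position `i` from `{0, …, k - 1}` leaves the disjoint consecutive pairs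
`{pairStart i j, pairStart i j + 1}`, `j < k / 2`; for even `k`, `i = k` removes nothing. -/
def IsPairingGap (k : ℕ) (i : Fin (k + 1)) : Prop :=
  (k % 2 = 0 ∧ i.val = k) ∨ (k % 2 = 1 ∧ i.val % 2 = 0 ∧ i.val < k)

def pairStart (i j : ℕ) : ℕ := if 2 * j < i then 2 * j else 2 * j + 1

namespace IsPairingGap

variable {k j l : ℕ} {i : Fin (k + 1)}

theorem pairStart_add_one_lt (h : IsPairingGap k i) (hj : j < k / 2) :
    pairStart i j + 1 < k := by
  unfold pairStart
  rcases h with h | h <;> split_ifs <;> omega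

theorem exists_pairStart_eq (h : IsPairingGap k i) (hl : l < k) (hli : l ≠ i) :
    ∃ j < k / 2, pairStart i j = l ∨ pairStart i j + 1 = l := by
  unfold pairStart
  rcases Nat.lt_or_gt_of_ne hli with hl' | hl'
  · exact ⟨l / 2, by rcases h with h | h <;> split_ifs <;> omega⟩
  · exact ⟨(l - 1) / 2, by rcases h with h | h <;> split_ifs <;> omega⟩

end IsPairingGap

theorem exists_isPairingGap_mem {k : ℕ} {e : Sym2 (Fin k)} (he : e ∈ (pathGraph k).edgeSet) :
    ∃ i : Fin (k + 1), IsPairingGap k i ∧ ∀ hi : i.val < k, (⟨i, hi⟩ : Fin k) ∈ e := by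
  rcases Nat.mod_two_eq_zero_or_one k with hk | hk
  · exact ⟨Fin.last k, Or.inl ⟨hk, rfl⟩, fun hi ↦ absurd hi (lt_irrefl k)⟩
  induction e using Sym2.inductionOn with | hf u v =>
  have huv : u.val + 1 = v.val ∨ v.val + 1 = u.val := pathGraph_adj.mp he
  rcases Nat.mod_two_eq_zero_or_one u.val with hu | hu
  · exact ⟨u.castSucc, Or.inr ⟨hk, hu, u.isLt⟩, fun _ ↦ Sym2.mem_mk_left u v⟩
  · exact ⟨v.castSucc, Or.inr ⟨hk, by rw [Fin.val_castSucc]; omega, v.isLt⟩,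
      fun _ ↦ Sym2.mem_mk_right u v⟩

section Darts

variable {G : SimpleGraph V} {k : ℕ}

def pairDarts (f : pathGraph k →g G) (i : {i : Fin (k + 1) // IsPairingGap k i})
    (j : Fin (k / 2)) : G.Dart :=
  ⟨(f ⟨pairStart i.1 j, Nat.lt_of_succ_lt (i.2.pairStart_add_one_lt j.2)⟩,
      f ⟨pairStart i.1 j + 1, i.2.pairStart_add_one_lt j.2⟩),
    f.map_adj (pathGraph_adj.mpr (Or.inl rfl))⟩

theorem apply_eq_of_pairDarts_eq {f g : pathGraph k →g G}
    {i : {i : Fin (k + 1) // IsPairingGap k i}} (h : pairDarts f i = pairDarts g i)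
    {l : ℕ} (hl : l < k) (hli : l ≠ i.1.val) : f ⟨l, hl⟩ = g ⟨l, hl⟩ := by
  obtain ⟨j, hj, hjl⟩ := i.2.exists_pairStart_eq hl hli
  have hd := (Dart.ext_iff _ _).mp (congrFun h ⟨j, hj⟩)
  simp only [pairDarts, Prod.mk.injEq] at hd
  rcases hjl with rfl | rfl
  exacts [hd.1, hd.2]

end Darts

theorem natCard_copy_pathGraph_le [Finite V] {G : SimpleGraph V}
    {col : Sym2 V → β} {k : ℕ} (hc : IsProperEdgeColoring G col)
    (hnr : ¬HasRainbowCopy G col (pathGraph k)) :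
    Nat.card (Copy (pathGraph k) G) ≤
      Nat.card ({i : Fin (k + 1) // IsPairingGap k i} × Sym2 (Fin k) × Sym2 (Fin k)) *
        Nat.card G.Dart ^ (k / 2) := by
  classical
  have := Fintype.ofFinite V
  have hrep : ∀ f : Copy (pathGraph k) G, ∃ e ∈ (pathGraph k).edgeSet,
      ∃ e' ∈ (pathGraph k).edgeSet, e ≠ e' ∧ col (e.map f) = col (e'.map f) := by
    intro f
    by_contra! h
    exact hnr (f.hasRainbowCopy fun e he e' he' hcol ↦ by_contra (h e he e' he' · hcol))
  choose e he e' he' hne hcol using hrep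
  choose i hi hie using fun f ↦ exists_isPairingGap_mem (he f)
  let code (f : Copy (pathGraph k) G) :
      {i : Fin (k + 1) // IsPairingGap k i} × Sym2 (Fin k) × Sym2 (Fin k) ×
        (Fin (k / 2) → G.Dart) :=
    (⟨i f, hi f⟩, e f, e' f, pairDarts f.toHom ⟨i f, hi f⟩)
  have hcode : Function.Injective code := by
    intro f g hfg
    simp only [code, Prod.mk.injEq] at hfg
    obtain ⟨hgap, hee, hee', hd⟩ := hfg
    rw [← hgap] at hd
    have hagree : ∀ l (hl : l < k), l ≠ (i f).val → f ⟨l, hl⟩ = g ⟨l, hl⟩ :=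
      fun l hl hli ↦ apply_eq_of_pairDarts_eq hd hl hli
    refine Copy.ext fun ⟨l, hl⟩ ↦ ?_
    rcases eq_or_ne l (i f).val with rfl | hli
    · have hmem := hie f hl
      refine hc.apply_eq_of_forall_ne (he f) hmem
        (hc.notMem_of_color_eq f (he f) (he' f) (hne f) (hcol f) hmem)
        (fun ⟨m, hm⟩ hmi ↦ hagree m hm fun h ↦ hmi (Fin.ext h)) (hcol f) ?_
      simpa only [hee, hee', Copy.coe_toHom] using hcol g
    · exact hagree l hl hli
  calc Nat.card (Copy (pathGraph k) G)
      ≤ Nat.card ({i : Fin (k + 1) // IsPairingGap k i} × Sym2 (Fin k) × Sym2 (Fin k) ×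
          (Fin (k / 2) → G.Dart)) := Nat.card_le_card_of_injective code hcode
    _ = _ := by
      simp only [Nat.card_prod, Nat.card_fun, Nat.card_eq_fintype_card (α := Fin _),
        Fintype.card_fin, mul_assoc]

section EdgeBound

open Finset

variable [Fintype V] [DecidableEq V] {G : SimpleGraph V} [DecidableRel G.Adj]

theorem card_edgeFinset_inter_sym2_le_erase (S : Finset V) (v : V) :
    #(G.edgeFinset ∩ S.sym2) ≤
      #(G.edgeFinset ∩ (S.erase v).sym2) + #(S ∩ G.neighborFinset v) := by
  have hsub : G.edgeFinset ∩ S.sym2 ⊆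
      G.edgeFinset ∩ (S.erase v).sym2 ∪ (S ∩ G.neighborFinset v).image (s(v, ·)) := by
    intro e he
    rw [mem_inter, mem_sym2_iff] at he
    obtain ⟨heG, heS⟩ := he
    by_cases hv : v ∈ e
    · obtain ⟨x, rfl⟩ := Sym2.mem_iff_exists.mp hv
      refine mem_union_right _ (mem_image.mpr ⟨x, mem_inter.mpr ⟨heS x (by simp), ?_⟩, rfl⟩)
      simpa using heG
    · refine mem_union_left _ (mem_inter.mpr ⟨heG, mem_sym2_iff.mpr fun x hx ↦ ?_⟩)
      exact mem_erase.mpr ⟨fun hxv ↦ hv (hxv ▸ hx), heS x hx⟩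
  calc #(G.edgeFinset ∩ S.sym2)
      ≤ #(G.edgeFinset ∩ (S.erase v).sym2 ∪ (S ∩ G.neighborFinset v).image (s(v, ·))) :=
        card_le_card hsub
    _ ≤ _ := (card_union_le _ _).trans (add_le_add le_rfl card_image_le)

/-- A vertex set maximising `e(S) - d |S|` has all inner degrees at least `d`, since deleting
any vertex cannot increase that quantity. -/
theorem exists_nonempty_forall_le_card_inter_neighborFinset {d : ℕ}
    (h : d * Fintype.card V < #G.edgeFinset) :
    ∃ S : Finset V, S.Nonempty ∧ ∀ v ∈ S, d ≤ #(S ∩ G.neighborFinset v) := by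
  let excess (S : Finset V) : ℤ := #(G.edgeFinset ∩ S.sym2) - d * #S
  obtain ⟨S, -, hmax⟩ := (univ : Finset (Finset V)).exists_max_image excess univ_nonempty
  have hpos : 0 < excess S := by
    refine lt_of_lt_of_le ?_ (hmax univ (mem_univ _))
    simp only [excess, sym2_univ, inter_univ, card_univ]
    omega
  refine ⟨S, nonempty_iff_ne_empty.mpr ?_, fun v hv ↦ ?_⟩
  · rintro rfl
    simp [excess] at hpos
  · have herase := hmax (S.erase v) (mem_univ _)
    have hcard := card_edgeFinset_inter_sym2_le_erase (G := G) S v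
    simp only [excess, card_erase_of_mem hv] at herase
    have hS : 1 ≤ #S := card_pos.mpr ⟨v, hv⟩
    push_cast [hS] at herase
    rw [mul_sub, mul_one] at herase
    omega

variable {col : Sym2 V → β}

theorem exists_rainbow_cons (hc : IsProperEdgeColoring G col) {S : Finset V} {u v : V}
    (w : G.Walk u v) (hdeg : 2 * w.length + 2 ≤ #(S ∩ G.neighborFinset u)) :
    ∃ x ∈ S, G.Adj x u ∧ x ∉ w.support ∧ col s(x, u) ∉ w.edges.map col := by
  classical
  let repeated := (S ∩ G.neighborFinset u).filter (col s(·, u) ∈ w.edges.map col)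
  have hrepeated : #repeated ≤ w.length := by
    refine (card_le_card_of_injOn (col s(·, u)) (t := (w.edges.map col).toFinset)
      (fun x hx ↦ ?_) (fun x hx y hy hxy ↦ ?_)).trans ?_
    · simpa using (mem_filter.mp hx).2
    · simp only [coe_filter, mem_inter, mem_neighborFinset, Set.mem_ofPred_eq,
        repeated] at hx hy
      simp only [Sym2.eq_swap (b := u)] at hxy
      exact hc.eq_of_color_eq hx.1.2 hy.1.2 hxy
    · simpa using List.toFinset_card_le (w.edges.map col)
  have hsupport : #w.support.toFinset ≤ w.length + 1 :=
    (List.toFinset_card_le _).trans_eq w.length_support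
  obtain ⟨x, hx⟩ : ((S ∩ G.neighborFinset u) \ (w.support.toFinset ∪ repeated)).Nonempty := by
    rw [← card_pos]
    have := le_card_sdiff (w.support.toFinset ∪ repeated) (S ∩ G.neighborFinset u)
    have := card_union_le w.support.toFinset repeated
    omega
  simp only [mem_sdiff, mem_union, mem_inter, mem_neighborFinset, List.mem_toFinset,
    mem_filter, repeated, not_or] at hx
  exact ⟨x, hx.1.1, hx.1.2.symm, hx.2.1, fun h ↦ hx.2.2 ⟨hx.1, h⟩⟩

theorem exists_rainbow_path (hc : IsProperEdgeColoring G col) {S : Finset V} (hS : S.Nonempty)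
    {ℓ : ℕ} (hdeg : ∀ v ∈ S, 2 * ℓ ≤ #(S ∩ G.neighborFinset v)) :
    ∃ (u v : V) (w : G.Walk u v), w.IsPath ∧ w.length = ℓ ∧ (w.edges.map col).Nodup := by
  suffices ∀ j ≤ ℓ, ∃ u ∈ S, ∃ v, ∃ w : G.Walk u v, w.IsPath ∧ w.length = j ∧
      (∀ x ∈ w.support, x ∈ S) ∧ (w.edges.map col).Nodup by
    obtain ⟨u, -, v, w, hw, hlen, -, hcol⟩ := this ℓ le_rfl
    exact ⟨u, v, w, hw, hlen, hcol⟩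
  intro j hj
  induction j with
  | zero =>
    obtain ⟨u, hu⟩ := hS
    exact ⟨u, hu, u, .nil, .nil, rfl, by simpa using hu, List.nodup_nil⟩
  | succ j ih =>
    obtain ⟨u, hu, v, w, hw, hlen, hsupp, hcol⟩ := ih (by omega)
    obtain ⟨x, hxS, hxu, hxw, hxcol⟩ :=
      exists_rainbow_cons hc (S := S) w (by have := hdeg u hu; omega)
    refine ⟨x, hxS, v, .cons hxu w, (Walk.cons_isPath_iff _ _).mpr ⟨hw, hxw⟩, by simp [hlen],
      ?_, ?_⟩
    · simp only [Walk.support_cons, List.mem_cons, forall_eq_or_imp]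
      exact ⟨hxS, hsupp⟩
    · simpa [hcol] using hxcol

theorem card_edgeFinset_le_of_not_hasRainbowCopy (hc : IsProperEdgeColoring G col) {k : ℕ}
    (hnr : ¬HasRainbowCopy G col (pathGraph k)) :
    #G.edgeFinset ≤ 2 * k * Fintype.card V := by
  cases k with
  | zero => exact absurd (hasRainbowCopy_pathGraph_zero G col) hnr
  | succ ℓ =>
    by_contra! h
    obtain ⟨S, hS, hdeg⟩ := exists_nonempty_forall_le_card_inter_neighborFinset
      (d := 2 * ℓ) (G := G) (lt_of_le_of_lt (by gcongr; omega) h)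
    obtain ⟨u, v, w, hw, hlen, hcol⟩ := exists_rainbow_path hc hS hdeg
    exact hnr (hlen ▸ hw.hasRainbowCopy hcol)

end EdgeBound

end

theorem path_rainbow_upper_general (k : ℕ) :
    ∃ C : ℝ, ∀ (n : ℕ) (G : SimpleGraph (Fin n)) (β : Type*) (col : Sym2 (Fin n) → β),
      IsProperEdgeColoring G col → ¬ HasRainbowCopy G col (pathGraph k) →
      (_root_.copyCount G (pathGraph k) : ℝ) ≤ C * (n : ℝ) ^ (k / 2) := by
  classical
  let c := Nat.card ({i : Fin (k + 1) // IsPairingGap k i} × Sym2 (Fin k) × Sym2 (Fin k))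
  refine ⟨(c * (4 * k) ^ (k / 2) : ℕ), fun n G β col hc hnr ↦ ?_⟩
  have hdarts : Nat.card G.Dart ≤ 4 * k * n := by
    have hedges := card_edgeFinset_le_of_not_hasRainbowCopy hc hnr
    rw [Fintype.card_fin] at hedges
    rw [Nat.card_eq_fintype_card, dart_card_eq_twice_card_edges]
    linarith
  have hcount : _root_.copyCount G (pathGraph k) ≤ c * (4 * k) ^ (k / 2) * n ^ (k / 2) :=
    calc _root_.copyCount G (pathGraph k)
        ≤ Nat.card (Copy (pathGraph k) G) := copyCount_le_natCard_copy G _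
      _ ≤ c * Nat.card G.Dart ^ (k / 2) := natCard_copy_pathGraph_le hc hnr
      _ ≤ c * (4 * k * n) ^ (k / 2) := by gcongr
      _ = c * (4 * k) ^ (k / 2) * n ^ (k / 2) := by rw [mul_pow, mul_assoc]
  exact_mod_cast hcount

/-- Upper bound of Theorem 1.1: ex(n, P_k, rainbow-P_k) = O(n^⌊k/2⌋). -/
theorem path_rainbow_upper (k : ℕ) (hk : 5 ≤ k) :
    ∃ C : ℝ, ∀ (n : ℕ) (G : SimpleGraph (Fin n)) (β : Type*) (col : Sym2 (Fin n) → β),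
      IsProperEdgeColoring G col → ¬ HasRainbowCopy G col (pathGraph k) →
      (_root_.copyCount G (pathGraph k) : ℝ) ≤ C * (n : ℝ) ^ (k / 2) :=
  path_rainbow_upper_general k
end

section
/- For every integer k ≥ 2 there exist a constant c > 0 and an integer n₀ such that for all n ≥ n₀ there is a simple graph G on n vertices together with a proper edge-coloring of G containing no rainbow copy of the cycle C_{2k+1}, such that G contains at least c·n^{2k−1} copies of C_{2k+1}. (Lower bound of Theorem 1.2 for odd cycles: ex(n, C_{2k+1}, rainbow-C_{2k+1}) = Ω(n^{2k−1}).) -/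
/-!
Blow up `C_{2k+1}`: every vertex becomes a class of `m` vertices and every edge a complete
bipartite graph `K_{m,m}`, except the edges `{0,1}` and `{2,3}`, which become perfect matchings.
Give all matching edges one common colour, and the edge `(a,x)(b,y)` of a complete bipartite
layer the colour `({a,b}, x + y mod m)`; this colouring is proper. Projecting a copy of
`C_{2k+1}` onto the classes yields a homomorphism from an odd cycle to itself, which covers every
edge of the cycle. So every copy runs through both matching layers and has two edges of the
common colour. Choosing one vertex per class, with equal indices across each matching, gives
`m^{2k-1}` copies, where `m = ⌊n/(2k+1)⌋`.
-/

open SimpleGraph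

open Function Fin.CommRing

variable {V W β : Type*}

section Cycle

variable {N : ℕ} [NeZero N]

lemma cycleGraph_adj_iff_eq_add_one (hN : 2 ≤ N) {u v : Fin N} :
    (cycleGraph N).Adj u v ↔ v = u + 1 ∨ u = v + 1 := by
  obtain ⟨n, rfl⟩ : ∃ n, N = n + 2 := ⟨N - 2, by omega⟩
  rw [cycleGraph_adj, sub_eq_iff_eq_add', sub_eq_iff_eq_add']
  tauto

lemma pathGraph_adj_add_one {z : Fin N} (hz : z + 1 ≠ 0) : (pathGraph N).Adj z (z + 1) := by
  obtain ⟨n, rfl⟩ : ∃ n, N = n + 1 := ⟨N - 1, by have := NeZero.pos N; omega⟩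
  rw [pathGraph_adj, Fin.val_add_one, if_neg (by rintro rfl; exact hz (Fin.last_add_one n))]
  exact Or.inl rfl

/-- A homomorphism from an odd cycle to itself cannot miss the edge `{a, a + 1}`: otherwise
`x ↦ φ x - (a + 1)` would map the cycle into a path, making it bipartite. -/
theorem exists_map_eq_of_hom_cycleGraph (hN : 2 ≤ N) (hodd : Odd N)
    (φ : cycleGraph N →g cycleGraph N) (a : Fin N) :
    ∃ i, s(φ i, φ (i + 1)) = s(a, a + 1) := by
  by_contra! hmiss
  have hpath : ∀ u v, φ v = φ u + 1 → s(φ u, φ v) ≠ s(a, a + 1) →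
      (pathGraph N).Adj (φ u - (a + 1)) (φ v - (a + 1)) := by
    intro u v huv hne
    rw [huv, show φ u + 1 - (a + 1) = φ u - (a + 1) + 1 by ring]
    refine pathGraph_adj_add_one fun h => hne ?_
    rw [huv, show φ u = a by linear_combination h]
  let ρ : cycleGraph N →g pathGraph N :=
    ⟨fun x => φ x - (a + 1), fun {u v} huv => by
      rcases (cycleGraph_adj_iff_eq_add_one hN).1 huv with rfl | rfl
      · rcases (cycleGraph_adj_iff_eq_add_one hN).1 (φ.map_adj huv) with h | h
        · exact hpath _ _ h (hmiss u)
        · exact (hpath _ _ h (Sym2.eq_swap ▸ hmiss u)).symm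
      · rcases (cycleGraph_adj_iff_eq_add_one hN).1 (φ.map_adj huv) with h | h
        · exact hpath _ _ h (Sym2.eq_swap ▸ hmiss v)
        · exact (hpath _ _ h (hmiss v)).symm⟩
  have h2 := (Coloring.colorable (G := cycleGraph N)
    ((pathGraph.bicoloring N).comp ρ)).chromaticNumber_le
  rw [chromaticNumber_cycleGraph_of_odd N hN hodd] at h2
  norm_num at h2

end Cycle

lemma HasRainbowCopy.exists_copy {G : SimpleGraph V} {c : Sym2 V → β} {H : SimpleGraph W}
    (h : HasRainbowCopy G c H) : ∃ f : Copy H G, Set.InjOn (c ∘ Sym2.map f) H.edgeSet := by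
  obtain ⟨A, ⟨φ⟩, hinj⟩ := h
  let f : Copy H G := A.coeCopy.comp φ.symm.toCopy
  have hf : ∀ e ∈ H.edgeSet, Sym2.map f e ∈ A.edgeSet := by
    rintro ⟨x, y⟩ hxy
    exact φ.symm.map_adj_iff.2 hxy
  exact ⟨f, fun e he e' he' hee' =>
    Sym2.map.injective f.injective (hinj (hf e he) (hf e' he') hee')⟩

theorem not_hasRainbowCopy_cycleGraph {N : ℕ} [NeZero N] (hN : 2 ≤ N) (hodd : Odd N)
    {G : SimpleGraph V} (ψ : G →g cycleGraph N) {c : Sym2 V → β} {a b : Fin N}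
    (hab : s(a, a + 1) ≠ s(b, b + 1)) {γ : β}
    (hc : ∀ e ∈ G.edgeSet, e.map ψ = s(a, a + 1) ∨ e.map ψ = s(b, b + 1) → c e = γ) :
    ¬ HasRainbowCopy G c (cycleGraph N) := by
  intro h
  obtain ⟨f, hf⟩ := h.exists_copy
  have hadj (i : Fin N) : (cycleGraph N).Adj i (i + 1) :=
    (cycleGraph_adj_iff_eq_add_one hN).2 (Or.inl rfl)
  have hedge (i : Fin N) : s(f i, f (i + 1)) ∈ G.edgeSet := f.toHom.map_adj (hadj i)
  obtain ⟨i, hi⟩ := exists_map_eq_of_hom_cycleGraph hN hodd (ψ.comp f.toHom) a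
  obtain ⟨i', hi'⟩ := exists_map_eq_of_hom_cycleGraph hN hodd (ψ.comp f.toHom) b
  have hii' : s(i, i + 1) = s(i', i' + 1) := hf (hadj i) (hadj i')
    ((hc _ (hedge i) (Or.inl hi)).trans (hc _ (hedge i') (Or.inr hi')).symm)
  apply hab
  rw [← hi, ← hi']
  simpa using congrArg (Sym2.map (ψ.comp f.toHom)) hii'

theorem IsProperEdgeColoring.comp {G : SimpleGraph V} {c : Sym2 V → β} {γ : Type*}
    (hc : IsProperEdgeColoring G c) {κ : β → γ} (hκ : Injective κ) :
    IsProperEdgeColoring G (κ ∘ c) :=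
  fun e₁ h₁ e₂ h₂ hne hv hcol => hc e₁ h₁ e₂ h₂ hne hv (hκ hcol)

theorem IsProperEdgeColoring.map {G : SimpleGraph V} {c : Sym2 V → β}
    (hc : IsProperEdgeColoring G c) {f : V ↪ W} {g : W → V} (hg : LeftInverse g f) :
    IsProperEdgeColoring (G.map f) (c ∘ Sym2.map g) := by
  have hcf (d : Sym2 V) : (c ∘ Sym2.map g) (Sym2.map f d) = c d := by
    rw [comp_apply, Sym2.map_map, hg.comp_eq_id, Sym2.map_id, id]
  intro e₁ he₁ e₂ he₂ hne ⟨v, hv₁, hv₂⟩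
  rw [edgeSet_map] at he₁ he₂
  obtain ⟨d₁, hd₁, rfl⟩ := he₁
  obtain ⟨d₂, hd₂, rfl⟩ := he₂
  simp only [Embedding.sym2Map_apply] at hne hv₁ hv₂ ⊢
  obtain ⟨a, ha, rfl⟩ := Sym2.mem_map.mp hv₁
  obtain ⟨b, hb, hab⟩ := Sym2.mem_map.mp hv₂
  rw [hcf, hcf]
  exact hc d₁ hd₁ d₂ hd₂ (fun h => hne (h ▸ rfl)) ⟨a, ha, f.injective hab ▸ hb⟩

def SimpleGraph.homOfLeftInverse (G : SimpleGraph V) {f : V ↪ W} {g : W → V}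
    (hg : LeftInverse g f) : G.map f →g G where
  toFun := g
  map_rel' := by
    rintro _ _ ⟨-, a, b, h, rfl, rfl⟩
    rwa [hg a, hg b]

lemma card_le_copyCount [Finite V] {ι : Type*} {G : SimpleGraph V} {H : SimpleGraph W}
    (f : ι → Copy H G) (hf : Injective fun i => Set.range (f i)) :
    Nat.card ι ≤ _root_.copyCount G H := by
  rw [← Set.ncard_univ]
  refine Set.ncard_le_ncard_of_injOn (fun i => (f i).toSubgraph)
    (fun i _ => ⟨(f i).isoToSubgraph.symm⟩) ?_ (Set.toFinite _)
  intro i _ i' _ h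
  apply hf
  simpa using congrArg Subgraph.verts h

section MatchingBlowup

variable {α : Type*} (F : SimpleGraph α) (M : Set (Sym2 α)) (m : ℕ)

def matchingBlowup : SimpleGraph (α × Fin m) where
  Adj x y := F.Adj x.1 y.1 ∧ (s(x.1, y.1) ∈ M → x.2 = y.2)
  symm := ⟨fun _ _ h => ⟨h.1.symm, fun hM => (h.2 (Sym2.eq_swap ▸ hM)).symm⟩⟩
  loopless := ⟨fun _ h => h.1.ne rfl⟩

def matchingBlowup.fst : matchingBlowup F M m →g F := ⟨Prod.fst, fun h => h.1⟩

open scoped Classical in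
noncomputable def blowupColoring : Sym2 (α × Fin m) → Option (Sym2 α × Fin m) :=
  Sym2.lift ⟨fun x y => if s(x.1, y.1) ∈ M then none else some (s(x.1, y.1), x.2 + y.2),
    fun x y => by simp only [Sym2.eq_swap, add_comm]⟩

variable {M} in
lemma blowupColoring_eq_none_iff (d : Sym2 (α × Fin m)) :
    blowupColoring M m d = none ↔ d.map Prod.fst ∈ M := by
  induction d using Sym2.ind
  simp [blowupColoring]

theorem isProperEdgeColoring_blowupColoring
    (hM : ∀ {a b b'}, s(a, b) ∈ M → s(a, b') ∈ M → b = b') :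
    IsProperEdgeColoring (matchingBlowup F M m) (blowupColoring M m) := by
  rintro _ h₁ _ h₂ hne ⟨x, hx₁, hx₂⟩
  obtain ⟨y, rfl⟩ := Sym2.mem_iff_exists.mp hx₁
  obtain ⟨z, rfl⟩ := Sym2.mem_iff_exists.mp hx₂
  have hyz : y ≠ z := fun h => hne (h ▸ rfl)
  rw [mem_edgeSet] at h₁ h₂
  simp only [blowupColoring, Sym2.lift_mk]
  split_ifs with hy hz hz
  · exact absurd (Prod.ext (hM hy hz) ((h₁.2 hy).symm.trans (h₂.2 hz))) hyz
  · simp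
  · simp
  · simp only [ne_eq, Option.some.injEq, Prod.mk.injEq, Sym2.congr_right]
    exact fun h => hyz (Prod.ext h.1 (add_left_cancel h.2))

variable {F M m}

variable (F) in
def transversal {ι : Type*} {J : α → ι} (hJ : ∀ {a b}, s(a, b) ∈ M → J a = J b)
    (t : ι → Fin m) : Copy F (matchingBlowup F M m) :=
  ⟨⟨fun a => (a, t (J a)), fun h => ⟨h, fun hab => congrArg t (hJ hab)⟩⟩,
    fun _ _ h => congrArg Prod.fst h⟩

@[simp]
lemma transversal_apply (F : SimpleGraph α) {ι : Type*} {J : α → ι}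
    (hJ : ∀ {a b}, s(a, b) ∈ M → J a = J b) (t : ι → Fin m) (a : α) :
    transversal F hJ t a = (a, t (J a)) :=
  rfl

lemma injective_range_transversal (F : SimpleGraph α) {ι : Type*} {J : α → ι}
    (hJ : ∀ {a b}, s(a, b) ∈ M → J a = J b) (hJs : Surjective J) :
    Injective fun t : ι → Fin m => Set.range (transversal F hJ t) := by
  intro t t' h
  simp only at h
  funext i
  obtain ⟨a, rfl⟩ := hJs i
  obtain ⟨a', ha'⟩ : (a, t (J a)) ∈ Set.range (transversal F hJ t') := h ▸ ⟨a, rfl⟩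
  simp only [transversal_apply, Prod.mk.injEq] at ha'
  rw [← ha'.2, ha'.1]

theorem le_copyCount_map_matchingBlowup [Finite W] {ι : Type*} [Finite ι] (e : α × Fin m ↪ W)
    {J : α → ι} (hJ : ∀ {a b}, s(a, b) ∈ M → J a = J b) (hJs : Surjective J) :
    m ^ Nat.card ι ≤ _root_.copyCount ((matchingBlowup F M m).map e) F := by
  have := card_le_copyCount (fun t => (Embedding.map e _).toCopy.comp (transversal F hJ t)) ?_
  · simpa [Nat.card_fun] using this
  intro t t' h
  apply injective_range_transversal F hJ hJs
  simp only [Copy.coe_comp, Set.range_comp] at h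
  exact Set.image_injective.mpr e.injective h

end MatchingBlowup

section TwoMatchedEdges

-- Cycle lengths are written `j + 4` so that the literals `0, 1, 2, 3` are distinct vertices.
variable (j : ℕ)

def twoMatchedEdges : Set (Sym2 (Fin (j + 4))) := {s(0, 0 + 1), s(2, 2 + 1)}

def collapse (c : Fin (j + 4)) : Fin (j + 2) :=
  ⟨if c.val < 2 then 0 else if c.val < 4 then 1 else c.val - 2, by split_ifs <;> omega⟩

variable {j}

lemma mem_twoMatchedEdges {a b : Fin (j + 4)} :
    s(a, b) ∈ twoMatchedEdges j ↔
      a.val = 0 ∧ b.val = 1 ∨ a.val = 1 ∧ b.val = 0 ∨ a.val = 2 ∧ b.val = 3 ∨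
        a.val = 3 ∧ b.val = 2 := by
  have h3 : ((3 : Fin (j + 4)) : ℕ) = 3 := rfl
  simp only [twoMatchedEdges, zero_add, show (2 : Fin (j + 4)) + 1 = 3 from rfl,
    Set.mem_insert_iff, Set.mem_singleton_iff, Sym2.eq_iff, Fin.ext_iff, Fin.val_zero,
    Fin.val_one, Fin.val_two, h3]
  tauto

lemma twoMatchedEdges_matching {a b b' : Fin (j + 4)} (h : s(a, b) ∈ twoMatchedEdges j)
    (h' : s(a, b') ∈ twoMatchedEdges j) : b = b' := by
  rw [mem_twoMatchedEdges] at h h'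
  omega

lemma collapse_eq_of_mem_twoMatchedEdges {a b : Fin (j + 4)}
    (h : s(a, b) ∈ twoMatchedEdges j) : collapse j a = collapse j b := by
  rw [mem_twoMatchedEdges] at h
  simp only [collapse, Fin.ext_iff]
  split_ifs <;> omega

lemma collapse_surjective : Surjective (collapse j) := by
  intro s
  refine ⟨⟨if s.val = 0 then 0 else if s.val = 1 then 2 else s.val + 2,
    by split_ifs <;> omega⟩, ?_⟩
  simp only [collapse, Fin.ext_iff]
  split_ifs <;> omega

lemma twoMatchedEdges_ne : s((0 : Fin (j + 4)), 0 + 1) ≠ s(2, 2 + 1) := by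
  have h3 : ((3 : Fin (j + 4)) : ℕ) = 3 := rfl
  rw [zero_add, show (2 : Fin (j + 4)) + 1 = 3 from rfl]
  simp only [ne_eq, Sym2.eq_iff, Fin.ext_iff, Fin.val_zero, Fin.val_one, Fin.val_two, h3]
  omega

end TwoMatchedEdges

theorem exists_rainbow_cycle_free_coloring {j m n : ℕ} (hj : Odd j) (hm : 0 < m)
    (hn : (j + 4) * m ≤ n) :
    ∃ (G : SimpleGraph (Fin n)) (col : Sym2 (Fin n) → ℕ), IsProperEdgeColoring G col ∧
      ¬ HasRainbowCopy G col (cycleGraph (j + 4)) ∧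
      m ^ (j + 2) ≤ _root_.copyCount G (cycleGraph (j + 4)) := by
  let P := matchingBlowup (cycleGraph (j + 4)) (twoMatchedEdges j) m
  let e : Fin (j + 4) × Fin m ↪ Fin n := finProdFinEquiv.toEmbedding.trans (Fin.castLEEmb hn)
  have : Nonempty (Fin (j + 4) × Fin m) := ⟨(0, ⟨0, hm⟩)⟩
  have hg : LeftInverse (invFun e) e := leftInverse_invFun e.injective
  obtain ⟨κ, hκ⟩ := exists_injective_nat (Option (Sym2 (Fin (j + 4)) × Fin m))
  refine ⟨P.map e, κ ∘ blowupColoring (twoMatchedEdges j) m ∘ Sym2.map (invFun e),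
    ?_, ?_, ?_⟩
  · exact ((isProperEdgeColoring_blowupColoring _ _ m twoMatchedEdges_matching).comp hκ).map hg
  · refine not_hasRainbowCopy_cycleGraph (by omega) (hj.add_even ⟨2, rfl⟩)
      ((matchingBlowup.fst _ _ m).comp (P.homOfLeftInverse hg)) twoMatchedEdges_ne
      (γ := κ none) fun d _ hd => ?_
    refine congrArg κ ((blowupColoring_eq_none_iff _ _).2 ?_)
    rw [Sym2.map_map]
    exact hd
  · simpa using le_copyCount_map_matchingBlowup e collapse_eq_of_mem_twoMatchedEdges
      collapse_surjective

/-- Lower bound of Theorem 1.2 for odd cycles: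
ex(n, C_{2k+1}, rainbow-C_{2k+1}) = Ω(n^{2k-1}). -/
theorem odd_cycle_rainbow_lower (k : ℕ) (hk : 2 ≤ k) :
    ∃ c : ℝ, 0 < c ∧ ∃ n₀ : ℕ, ∀ n ≥ n₀,
      ∃ (G : SimpleGraph (Fin n)) (col : Sym2 (Fin n) → ℕ),
        IsProperEdgeColoring G col ∧ ¬ HasRainbowCopy G col (cycleGraph (2 * k + 1)) ∧
        c * (n : ℝ) ^ (2 * k - 1) ≤ (_root_.copyCount G (cycleGraph (2 * k + 1)) : ℝ) := by
  obtain ⟨j, hkj, hj⟩ : ∃ j, 2 * k + 1 = j + 4 ∧ Odd j :=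
    ⟨2 * k - 3, by omega, k - 2, by omega⟩
  rw [hkj, show 2 * k - 1 = j + 2 by omega]
  refine ⟨(1 / (2 * (j + 4) : ℝ)) ^ (j + 2), by positivity, 2 * (j + 4), fun n hn => ?_⟩
  have hlt := Nat.lt_mul_div_succ n (show 0 < j + 4 by omega)
  set m := n / (j + 4)
  obtain ⟨G, col, hproper, hfree, hcount⟩ := exists_rainbow_cycle_free_coloring hj
    (Nat.div_pos (by omega) (by omega)) (Nat.mul_div_le n _)
  refine ⟨G, col, hproper, hfree, ?_⟩
  have hnm : (n : ℝ) ≤ 2 * (j + 4) * m := by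
    exact_mod_cast (by nlinarith : n ≤ 2 * (j + 4) * m)
  calc (1 / (2 * (j + 4) : ℝ)) ^ (j + 2) * n ^ (j + 2) = (n / (2 * (j + 4))) ^ (j + 2) := by
        rw [← mul_pow, one_div_mul_eq_div]
    _ ≤ (m : ℝ) ^ (j + 2) := by
        gcongr
        rw [div_le_iff₀ (by positivity)]
        linarith
    _ ≤ _ := by exact_mod_cast hcount
end

section
/- For every integer k ≥ 2 there exists a constant C such that for all n, every simple graph G on n vertices that admits a proper edge-coloring with no rainbow copy of the cycle C_{2k+1} contains at most C·n^{2k−1} copies of C_{2k+1}. (Upper bound of Theorem 1.2 for odd cycles: ex(n, C_{2k+1}, rainbow-C_{2k+1}) = O(n^{2k−1}).) -/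
open SimpleGraph

/-!
Count labelled cycles `f : Fin L → V`, `L = 2k + 1`, with edges `e x = s(f x, f (x + 1))`. As no
cycle is rainbow and the coloring is proper, some cycle has two non-adjacent edges `e i`, `e j`
of the same color, and up to swapping them, vertex `i` is neither `j + 1` nor a neighbour of it.
Fix such `(i, j)` and call the edges avoiding the vertices `i` and `j + 1` the frame.

If the frame repeats a color, at `a` and `b` say, then by properness `f (b + 1)` is determined
by `f b` and the color of `e a`, and then `f (j + 1)` by `f j` and the color of `e i`: such
cycles are determined by their values off `{j + 1, b + 1}`, so there are at most `L² n^(L-2)`.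

If the frame is rainbow, consider the cycles agreeing off `{i, j + 1}`. Each is determined by the
color of its edge `e i` (and by several other single parameters). If there were more than
`2L + 5` of them, we could choose `A` and then `B` among them so that the colors of `e (i - 1)`,
`e i` of `A` and of `e j`, `e (j + 1)` of `B` are new and distinct; replacing `A (j + 1)` by
`B (j + 1)` then gives a rainbow cycle. Hence there are at most `(2L + 5) n^(L-2)` of them.
Summing over the `L²` pairs `(i, j)` bounds the number of labelled cycles by `O(n^(L-2))`.
-/

section CycleCopies

open Finset
open scoped Fin.CommRing

variable {V W β : Type*} {G : SimpleGraph V} {c : Sym2 V → β}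

theorem IsProperEdgeColoring.eq_of_color_eq_s5 (hc : IsProperEdgeColoring G c) {a b b' : V}
    (hb : G.Adj a b) (hb' : G.Adj a b') (h : c s(a, b) = c s(a, b')) : b = b' := by
  by_contra hne
  refine hc _ hb _ hb' ?_ ⟨a, Sym2.mem_mk_left a b, Sym2.mem_mk_left a b'⟩ h
  rw [Ne, Sym2.eq_iff]
  rintro (⟨-, h'⟩ | ⟨rfl, -⟩)
  exacts [hne h', hb'.ne rfl]

theorem hasRainbowCopy_of_injOn {H : SimpleGraph W} (f : Copy H G)
    (h : Set.InjOn (c ∘ Sym2.map f) H.edgeSet) : HasRainbowCopy G c H := by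
  refine ⟨f.toSubgraph, ⟨f.isoToSubgraph.symm⟩, ?_⟩
  rw [Subgraph.edgeSet_map, Subgraph.edgeSet_top]
  exact h.image_of_comp

theorem copyCount_le_labelledCopyCount [Fintype V] [Fintype W] (G : SimpleGraph V)
    (H : SimpleGraph W) : _root_.copyCount G H ≤ G.labelledCopyCount H := by
  classical
  refine le_of_eq_of_le ?_ G.copyCount_le_labelledCopyCount
  rw [_root_.copyCount, SimpleGraph.copyCount, ← Set.ncard_coe_finset]
  congr 1
  ext A
  simp only [coe_filter, mem_univ, true_and, Set.mem_ofPred_eq]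
  exact ⟨fun ⟨e⟩ => ⟨e.symm⟩, fun ⟨e⟩ => ⟨e.symm⟩⟩

theorem Function.Injective.update_of_forall_ne {α : Type*} [DecidableEq α] {f : α → V}
    (hf : Function.Injective f) {a : α} {v : V} (hv : ∀ x ≠ a, f x ≠ v) :
    Function.Injective (Function.update f a v) := by
  intro x y hxy
  by_cases hx : x = a <;> by_cases hy : y = a
  · rw [hx, hy]
  · rw [hx, Function.update_self, Function.update_of_ne hy] at hxy
    exact absurd hxy.symm (hv y hy)
  · rw [hy, Function.update_self, Function.update_of_ne hx] at hxy
    exact absurd hxy (hv x hx)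
  · rwa [Function.update_of_ne hx, Function.update_of_ne hy, hf.eq_iff] at hxy

theorem Finset.exists_mem_notMem_of_injOn {α γ : Type*} [DecidableEq γ] {s : Finset α}
    {g₁ g₂ : α → γ} (h₁ : Set.InjOn g₁ s) (h₂ : Set.InjOn g₂ s) (t : Finset γ)
    (hst : 2 * #t < #s) : ∃ a ∈ s, g₁ a ∉ t ∧ g₂ a ∉ t := by
  classical
  have hcard {g : α → γ} (hg : Set.InjOn g s) : #{a ∈ s | g a ∈ t} ≤ #t :=
    card_le_card_of_injOn g (fun _ ha => (mem_filter.1 ha).2) (hg.mono (filter_subset _ _))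
  obtain ⟨a, ha, hat⟩ := exists_mem_notMem_of_card_lt_card (t := s)
    (s := {a ∈ s | g₁ a ∈ t} ∪ {a ∈ s | g₂ a ∈ t})
    ((card_union_le _ _).trans_lt (by linarith [hcard h₁, hcard h₂]))
  simp only [mem_union, mem_filter, ha, true_and, not_or] at hat
  exact ⟨a, ha, hat⟩

theorem Finset.card_le_mul_pow_of_eqOn {ι F : Type*} [Fintype ι] [Fintype V] [FunLike F ι V]
    {p q : ι} (hpq : p ≠ q) (T : Finset F) (K : ℕ)
    (hK : ∀ S ⊆ T, (∀ f ∈ S, ∀ f' ∈ S, Set.EqOn f f' {x | x ≠ p ∧ x ≠ q}) → #S ≤ K) :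
    #T ≤ K * Fintype.card V ^ (Fintype.card ι - 2) := by
  classical
  let r (f : F) (x : {x // x ≠ p ∧ x ≠ q}) : V := f x
  calc #T ≤ K * #(T.image r) := card_le_mul_card_image T K fun g _ =>
        hK _ (filter_subset _ _) fun f hf f' hf' x hx =>
          congrFun ((mem_filter.1 hf).2.trans (mem_filter.1 hf').2.symm) ⟨x, hx⟩
    _ ≤ K * Fintype.card V ^ (Fintype.card ι - 2) := by
      refine Nat.mul_le_mul_left K ((card_le_univ _).trans_eq ?_)
      have : ({x | x ≠ p ∧ x ≠ q} : Finset ι) = univ \ {p, q} := by ext; simp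
      rw [Fintype.card_fun, Fintype.card_subtype, this, card_sdiff_of_subset (subset_univ _),
        card_univ, card_pair hpq]

theorem Fin.add_one_ne_self {n : ℕ} (x : Fin (n + 2)) : x + 1 ≠ x := by
  simp

theorem Fin.add_two_ne_self {n : ℕ} (x : Fin (n + 3)) : x + 2 ≠ x := by
  simp [Fin.ext_iff, Nat.mod_eq_of_lt (by omega : 2 < n + 3)]

theorem Fin.add_four_ne_self {n : ℕ} (x : Fin (n + 5)) : x + 4 ≠ x := by
  simp [Fin.ext_iff, Nat.mod_eq_of_lt (by omega : 4 < n + 5)]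

namespace SimpleGraph

variable {n : ℕ}

theorem cycleGraph_adj_add_one (i : Fin (n + 2)) : (cycleGraph (n + 2)).Adj i (i + 1) :=
  cycleGraph_adj.2 (Or.inr (add_sub_cancel_left i 1))

theorem cycleGraph_adj_iff {u v : Fin (n + 2)} :
    (cycleGraph (n + 2)).Adj u v ↔ v = u + 1 ∨ u = v + 1 := by
  rw [cycleGraph_adj, sub_eq_iff_eq_add', sub_eq_iff_eq_add', or_comm]

theorem cycleGraph_edgeSet : (cycleGraph (n + 2)).edgeSet = Set.range fun i => s(i, i + 1) := by
  ext e
  induction e with | h u v => ?_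
  rw [mem_edgeSet, cycleGraph_adj_iff]
  constructor
  · rintro (rfl | rfl)
    exacts [⟨u, rfl⟩, ⟨v, Sym2.eq_swap⟩]
  · rintro ⟨i, hi⟩
    rcases Sym2.eq_iff.1 hi with ⟨rfl, rfl⟩ | ⟨rfl, rfl⟩
    exacts [Or.inl rfl, Or.inr rfl]

namespace Copy

theorem adj_add_one (f : Copy (cycleGraph (n + 2)) G) (i : Fin (n + 2)) :
    G.Adj (f i) (f (i + 1)) :=
  f.toHom.map_adj (cycleGraph_adj_add_one i)

def ofCycle (σ : Fin (n + 2) → V) (hσ : Function.Injective σ)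
    (hadj : ∀ i, G.Adj (σ i) (σ (i + 1))) : Copy (cycleGraph (n + 2)) G where
  toHom := ⟨σ, fun {u v} h => by
    rcases cycleGraph_adj_iff.1 h with rfl | rfl
    exacts [hadj u, (hadj v).symm]⟩
  injective' := hσ

end Copy

end SimpleGraph

/- Cycles have length `m + 5`: this makes `Fin (m + 5)` a ring in which `1`, `2` and `4` are
nonzero, which is all the cyclic arithmetic below needs. -/
variable {m : ℕ}

def cycleEdge (f : Copy (cycleGraph (m + 5)) G) (i : Fin (m + 5)) : Sym2 V := s(f i, f (i + 1))

theorem cycleEdge_congr {f f' : Copy (cycleGraph (m + 5)) G} {a : Fin (m + 5)} (h₀ : f a = f' a)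
    (h₁ : f (a + 1) = f' (a + 1)) : cycleEdge f a = cycleEdge f' a := by
  rw [cycleEdge, cycleEdge, h₀, h₁]

theorem hasRainbowCopy_of_injective (f : Copy (cycleGraph (m + 5)) G)
    (h : Function.Injective fun i => c (cycleEdge f i)) :
    HasRainbowCopy G c (cycleGraph (m + 5)) := by
  refine hasRainbowCopy_of_injOn f ?_
  rw [cycleGraph_edgeSet]
  rintro _ ⟨i, rfl⟩ _ ⟨j, rfl⟩ hij
  rw [h hij]

namespace IsProperEdgeColoring

variable (hc : IsProperEdgeColoring G c) (f f' : Copy (cycleGraph (m + 5)) G)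
include hc

theorem apply_add_one_eq {i : Fin (m + 5)} (h : f i = f' i)
    (hcol : c (cycleEdge f i) = c (cycleEdge f' i)) : f (i + 1) = f' (i + 1) :=
  hc.eq_of_color_eq_s5 (f.adj_add_one i) (h ▸ f'.adj_add_one i)
    (by rwa [cycleEdge, cycleEdge, ← h] at hcol)

theorem apply_eq_of_add_one {i : Fin (m + 5)} (h : f (i + 1) = f' (i + 1))
    (hcol : c (cycleEdge f i) = c (cycleEdge f' i)) : f i = f' i := by
  refine hc.eq_of_color_eq_s5 (f.adj_add_one i).symm (h ▸ (f'.adj_add_one i).symm) ?_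
  rwa [cycleEdge, cycleEdge, ← h, Sym2.eq_swap (a := f i), Sym2.eq_swap (a := f' i)] at hcol

theorem color_ne_add_one (i : Fin (m + 5)) : c (cycleEdge f i) ≠ c (cycleEdge f (i + 1)) := by
  intro h
  have h₂ : i + 1 + 1 = i := (f.injective <| hc.eq_of_color_eq_s5 (f.adj_add_one i).symm
    (f.adj_add_one (i + 1)) (by rwa [cycleEdge, Sym2.eq_swap] at h)).symm
  exact Fin.add_two_ne_self i (by rwa [add_assoc, one_add_one_eq_two] at h₂)

theorem exists_color_eq_of_not_hasRainbowCopy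
    (hnr : ¬HasRainbowCopy G c (cycleGraph (m + 5))) :
    ∃ i j, i ≠ j ∧ i ≠ j + 1 ∧ i ≠ j + 2 ∧ c (cycleEdge f i) = c (cycleEdge f j) := by
  obtain ⟨i, j, hij, hcol⟩ : ∃ i j, i ≠ j ∧ c (cycleEdge f i) = c (cycleEdge f j) := by
    by_contra! h
    exact hnr (hasRainbowCopy_of_injective f fun i j hij => by_contra fun hne => h i j hne hij)
  have hji₁ : j ≠ i + 1 := fun h => hc.color_ne_add_one f i (h ▸ hcol)
  have hij₁ : i ≠ j + 1 := fun h => hc.color_ne_add_one f j (h ▸ hcol.symm)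
  by_cases hij₂ : i = j + 2
  · refine ⟨j, i, hij.symm, hji₁, fun h => Fin.add_four_ne_self j ?_, hcol.symm⟩
    calc j + 4 = j + 2 + 2 := by rw [add_assoc]; norm_num
      _ = j := by rw [← hij₂, ← h]
  · exact ⟨i, j, hij, hij₁, hij₂, hcol⟩

end IsProperEdgeColoring

/-- The edges of the cycle that avoid the vertices `i` and `j + 1`. -/
def frame (i j : Fin (m + 5)) : Set (Fin (m + 5)) := {x | x ∉ [i - 1, i, j, j + 1]}

theorem mem_frame_iff {i j x : Fin (m + 5)} :
    x ∈ frame i j ↔ x ≠ i - 1 ∧ x ≠ i ∧ x ≠ j ∧ x ≠ j + 1 := by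
  simp [frame]

theorem cycleEdge_eq_of_mem_frame {f f' : Copy (cycleGraph (m + 5)) G} {i j x : Fin (m + 5)}
    (h : Set.EqOn f f' {x | x ≠ i ∧ x ≠ j + 1}) (hx : x ∈ frame i j) :
    cycleEdge f x = cycleEdge f' x := by
  obtain ⟨hxi₁, hxi, hxj, hxj₁⟩ := mem_frame_iff.1 hx
  exact cycleEdge_congr (h ⟨hxi, hxj₁⟩)
    (h ⟨fun h' => hxi₁ (eq_sub_of_add_eq h'), (add_left_injective 1).ne hxj⟩)

theorem exists_frame_colors {i j : Fin (m + 5)} {T : Finset (Copy (cycleGraph (m + 5)) G)}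
    (hagree : ∀ f ∈ T, ∀ f' ∈ T, Set.EqOn f f' {x | x ≠ i ∧ x ≠ j + 1}) :
    ∃ FC : Finset β, #FC ≤ m + 5 ∧ ∀ f ∈ T, ∀ x ∈ frame i j, c (cycleEdge f x) ∈ FC := by
  classical
  rcases T.eq_empty_or_nonempty with rfl | ⟨f₀, hf₀⟩
  · exact ⟨∅, by simp, by simp⟩
  refine ⟨(frame i j).toFinset.image fun x => c (cycleEdge f₀ x),
    card_image_le.trans ((card_le_univ _).trans (by simp)), fun f hf x hx => ?_⟩
  rw [cycleEdge_eq_of_mem_frame (hagree f hf f₀ hf₀) hx]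
  exact mem_image_of_mem _ (Set.mem_toFinset.2 hx)

section Splice

variable {i j : Fin (m + 5)} (hij : i ≠ j) (hij₂ : i ≠ j + 2)
  {A B : Copy (cycleGraph (m + 5)) G} (hAB : Set.EqOn A B {x | x ≠ i ∧ x ≠ j + 1})
  (hBA : B (j + 1) ≠ A i)
include hij hij₂ hAB hBA

/-- Replace the vertex `A (j + 1)` by `B (j + 1)`. -/
theorem exists_splice :
    ∃ τ : Copy (cycleGraph (m + 5)) G,
      (∀ x, x ≠ j → x ≠ j + 1 → cycleEdge τ x = cycleEdge A x) ∧
      cycleEdge τ j = cycleEdge B j ∧ cycleEdge τ (j + 1) = cycleEdge B (j + 1) := by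
  classical
  set τ := Function.update (⇑A) (j + 1) (B (j + 1))
  have hτ : ∀ x, x ≠ j + 1 → τ x = A x := fun x hx => Function.update_of_ne hx _ _
  have hτj₁ : τ (j + 1) = B (j + 1) := Function.update_self _ _ _
  have hτj : τ j = B j := (hτ j (Fin.add_one_ne_self j).symm).trans
    (hAB ⟨hij.symm, (Fin.add_one_ne_self j).symm⟩)
  have hj₂ : j + 1 + 1 ≠ i := by rw [add_assoc, one_add_one_eq_two]; exact hij₂.symm
  have hτj₂ : τ (j + 1 + 1) = B (j + 1 + 1) :=
    (hτ _ (Fin.add_one_ne_self _)).trans (hAB ⟨hj₂, Fin.add_one_ne_self _⟩)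
  have hτinj : Function.Injective τ :=
    Function.Injective.update_of_forall_ne (f := A) A.injective fun x hx => by
      by_cases hxi : x = i
      · rw [hxi]; exact hBA.symm
      · rw [hAB ⟨hxi, hx⟩]; exact B.injective.ne hx
  have hτadj : ∀ x, G.Adj (τ x) (τ (x + 1)) := by
    intro x
    by_cases hxj : x = j
    · rw [hxj, hτj, hτj₁]; exact B.adj_add_one j
    by_cases hxj₁ : x = j + 1
    · rw [hxj₁, hτj₁, hτj₂]; exact B.adj_add_one (j + 1)
    rw [hτ x hxj₁, hτ (x + 1) ((add_left_injective 1).ne hxj)]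
    exact A.adj_add_one x
  exact ⟨Copy.ofCycle τ hτinj hτadj, fun x hxj hxj₁ => cycleEdge_congr (hτ x hxj₁)
    (hτ _ ((add_left_injective 1).ne hxj)), cycleEdge_congr hτj hτj₁, cycleEdge_congr hτj₁ hτj₂⟩

theorem hasRainbowCopy_splice (hij₁ : i ≠ j + 1) (hB : c (cycleEdge B i) = c (cycleEdge B j))
    (hA : Set.InjOn (fun x => c (cycleEdge A x)) (frame i j))
    (hnodup : [c (cycleEdge A (i - 1)), c (cycleEdge A i), c (cycleEdge B i),
      c (cycleEdge B (j + 1))].Nodup)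
    (hfresh : ∀ x ∈ frame i j, c (cycleEdge A x) ∉ [c (cycleEdge A (i - 1)), c (cycleEdge A i),
      c (cycleEdge B i), c (cycleEdge B (j + 1))]) :
    HasRainbowCopy G c (cycleGraph (m + 5)) := by
  obtain ⟨τ, hτA, hτj, hτj₁⟩ := exists_splice hij hij₂ hAB hBA
  have hframe : ∀ x ∈ frame i j, cycleEdge τ x = cycleEdge A x := fun x hx =>
    hτA x (mem_frame_iff.1 hx).2.2.1 (mem_frame_iff.1 hx).2.2.2
  have hnew : [i - 1, i, j, j + 1].map (fun x => c (cycleEdge τ x)) = [c (cycleEdge A (i - 1)),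
      c (cycleEdge A i), c (cycleEdge B i), c (cycleEdge B (j + 1))] := by
    have hi₁ : i - 1 ≠ j := fun h => hij₁ (sub_eq_iff_eq_add.1 h)
    have hi₂ : i - 1 ≠ j + 1 := fun h => hij₂ <| by
      rwa [sub_eq_iff_eq_add, add_assoc, one_add_one_eq_two] at h
    simp only [List.map_cons, List.map_nil, hτA _ hi₁ hi₂, hτA i hij hij₁, hτj, hτj₁, hB]
  refine hasRainbowCopy_of_injective τ fun x y (hxy : c (cycleEdge τ x) = c (cycleEdge τ y)) => ?_
  by_cases hx : x ∈ frame i j <;> by_cases hy : y ∈ frame i j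
  · exact hA hx hy (by simpa only [hframe x hx, hframe y hy] using hxy)
  · refine absurd ?_ (hfresh x hx)
    rw [← hframe x hx, hxy, ← hnew]
    exact List.mem_map_of_mem (not_not.1 hy)
  · refine absurd ?_ (hfresh y hy)
    rw [← hframe y hy, ← hxy, ← hnew]
    exact List.mem_map_of_mem (not_not.1 hx)
  · exact List.inj_on_of_nodup_map (hnew ▸ hnodup) (not_not.1 hx) (not_not.1 hy) hxy

end Splice

namespace IsProperEdgeColoring

section Fiber

variable (hc : IsProperEdgeColoring G c) {i j : Fin (m + 5)} (hij : i ≠ j)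
  {T : Finset (Copy (cycleGraph (m + 5)) G)}
  (hcol : ∀ f ∈ T, c (cycleEdge f i) = c (cycleEdge f j))
  (hagree : ∀ f ∈ T, ∀ f' ∈ T, Set.EqOn f f' {x | x ≠ i ∧ x ≠ j + 1})
include hc hij hcol hagree

theorem injOn_color : Set.InjOn (fun f : Copy (cycleGraph (m + 5)) G => c (cycleEdge f i)) T := by
  intro f hf f' hf' (h : c (cycleEdge f i) = c (cycleEdge f' i))
  have e := hagree f hf f' hf'
  have hi : f i = f' i :=
    hc.apply_eq_of_add_one f f' (e ⟨Fin.add_one_ne_self i, (add_left_injective 1).ne hij⟩) h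
  have hj₁ : f (j + 1) = f' (j + 1) := hc.apply_add_one_eq f f'
    (e ⟨hij.symm, (Fin.add_one_ne_self j).symm⟩) (by rw [← hcol f hf, h, hcol f' hf'])
  refine Copy.ext fun x => ?_
  by_cases hxi : x = i
  · rw [hxi, hi]
  by_cases hxj : x = j + 1
  · rw [hxj, hj₁]
  exact e ⟨hxi, hxj⟩

theorem injOn_apply : Set.InjOn (fun f : Copy (cycleGraph (m + 5)) G => f i) T :=
  fun f hf f' hf' h => hc.injOn_color hij hcol hagree hf hf' <| congrArg c <| cycleEdge_congr h
    (hagree f hf f' hf' ⟨Fin.add_one_ne_self i, (add_left_injective 1).ne hij⟩)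

theorem injOn_apply_add_one :
    Set.InjOn (fun f : Copy (cycleGraph (m + 5)) G => f (j + 1)) T := by
  intro f hf f' hf' (h : f (j + 1) = f' (j + 1))
  refine hc.injOn_color hij hcol hagree hf hf' ?_
  have hj : f j = f' j := hagree f hf f' hf' ⟨hij.symm, (Fin.add_one_ne_self j).symm⟩
  simp only [hcol f hf, hcol f' hf', cycleEdge_congr hj h]

variable (hij₂ : i ≠ j + 2)
include hij₂

theorem injOn_color_sub_one :
    Set.InjOn (fun f : Copy (cycleGraph (m + 5)) G => c (cycleEdge f (i - 1))) T := by
  intro f hf f' hf' h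
  refine hc.injOn_apply hij hcol hagree hf hf' ?_
  have hi₁ : f (i - 1) = f' (i - 1) := hagree f hf f' hf'
    ⟨fun h => Fin.add_one_ne_self (i - 1) (by rw [sub_add_cancel, h]),
      fun h => hij₂ (by rwa [sub_eq_iff_eq_add, add_assoc, one_add_one_eq_two] at h)⟩
  simpa only [sub_add_cancel] using hc.apply_add_one_eq f f' hi₁ h

theorem injOn_color_add_one :
    Set.InjOn (fun f : Copy (cycleGraph (m + 5)) G => c (cycleEdge f (j + 1))) T := by
  intro f hf f' hf' h
  refine hc.injOn_apply_add_one hij hcol hagree hf hf' ?_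
  have hj₂ : f (j + 1 + 1) = f' (j + 1 + 1) := hagree f hf f' hf'
    ⟨by rw [add_assoc, one_add_one_eq_two]; exact hij₂.symm, Fin.add_one_ne_self _⟩
  exact hc.apply_eq_of_add_one f f' hj₂ h

end Fiber

theorem eq_of_eqOn_of_color_eq (hc : IsProperEdgeColoring G c)
    {i j a b : Fin (m + 5)} (hij : i ≠ j) (hij₁ : i ≠ j + 1) (ha : a ∈ frame i j)
    (hb : b ∈ frame i j) (hab : a ≠ b) {f f' : Copy (cycleGraph (m + 5)) G}
    (hf : c (cycleEdge f i) = c (cycleEdge f j) ∧ c (cycleEdge f a) = c (cycleEdge f b))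
    (hf' : c (cycleEdge f' i) = c (cycleEdge f' j) ∧ c (cycleEdge f' a) = c (cycleEdge f' b))
    (h : Set.EqOn f f' {x | x ≠ j + 1 ∧ x ≠ b + 1}) : f = f' := by
  obtain ⟨-, -, haj, haj₁⟩ := mem_frame_iff.1 ha
  obtain ⟨-, -, hbj, hbj₁⟩ := mem_frame_iff.1 hb
  have hab₁ : a ≠ b + 1 := fun h => hc.color_ne_add_one f b (h ▸ hf.2).symm
  have hea : cycleEdge f a = cycleEdge f' a := cycleEdge_congr (h ⟨haj₁, hab₁⟩)
    (h ⟨(add_left_injective 1).ne haj, (add_left_injective 1).ne hab⟩)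
  have hb₁ : f (b + 1) = f' (b + 1) := hc.apply_add_one_eq f f'
    (h ⟨hbj₁, (Fin.add_one_ne_self b).symm⟩) (by rw [← hf.2, ← hf'.2, hea])
  have h' : ∀ x, x ≠ j + 1 → f x = f' x := fun x hx => by
    by_cases hxb : x = b + 1
    · rw [hxb, hb₁]
    · exact h ⟨hx, hxb⟩
  have hei : cycleEdge f i = cycleEdge f' i :=
    cycleEdge_congr (h' i hij₁) (h' _ ((add_left_injective 1).ne hij))
  have hj₁ : f (j + 1) = f' (j + 1) := hc.apply_add_one_eq f f'
    (h' j (Fin.add_one_ne_self j).symm) (by rw [← hf.1, ← hf'.1, hei])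
  refine Copy.ext fun x => ?_
  by_cases hxj : x = j + 1
  · rw [hxj, hj₁]
  · exact h' x hxj

/- Choose `A` whose colors at `i - 1` and `i` do not occur on the frame, then `B` whose colors
at `i` and `j + 1` avoid these two and the frame, and splice. -/
theorem card_le_of_eqOn (hc : IsProperEdgeColoring G c)
    (hnr : ¬HasRainbowCopy G c (cycleGraph (m + 5))) {i j : Fin (m + 5)} (hij : i ≠ j)
    (hij₁ : i ≠ j + 1) (hij₂ : i ≠ j + 2) {T : Finset (Copy (cycleGraph (m + 5)) G)}
    (hT : ∀ f ∈ T, c (cycleEdge f i) = c (cycleEdge f j) ∧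
      Set.InjOn (fun x => c (cycleEdge f x)) (frame i j))
    (hagree : ∀ f ∈ T, ∀ f' ∈ T, Set.EqOn f f' {x | x ≠ i ∧ x ≠ j + 1}) :
    #T ≤ 2 * (m + 5) + 5 := by
  classical
  by_contra! hT_card
  have hcol : ∀ f ∈ T, c (cycleEdge f i) = c (cycleEdge f j) := fun f hf => (hT f hf).1
  have hχ := hc.injOn_color hij hcol hagree
  obtain ⟨FC, hFC_card, hFC⟩ := exists_frame_colors (c := c) hagree
  obtain ⟨A, hA, hαA, hχA⟩ := exists_mem_notMem_of_injOn
    (hc.injOn_color_sub_one hij hcol hagree hij₂) hχ FC (by omega)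
  set S := insert (c (cycleEdge A (i - 1))) (insert (c (cycleEdge A i)) FC)
  have hS : #S ≤ #FC + 2 :=
    (card_insert_le _ _).trans (Nat.add_le_add_right (card_insert_le _ _) 1)
  set T' := T.filter fun f => f (j + 1) ≠ A i
  have hT' : #T ≤ #T' + 1 := by
    rw [← card_filter_add_card_filter_not (s := T) fun f => f (j + 1) ≠ A i]
    refine Nat.add_le_add_left (card_le_one.2 fun f hf f' hf' => ?_) _
    refine hc.injOn_apply_add_one hij hcol hagree (filter_subset _ _ hf) (filter_subset _ _ hf') ?_
    exact (not_not.1 (mem_filter.1 hf).2).trans (not_not.1 (mem_filter.1 hf').2).symm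
  have hT'T : (T' : Set (Copy (cycleGraph (m + 5)) G)) ⊆ T := coe_subset.2 (filter_subset _ _)
  obtain ⟨B, hB, hχB, hβB⟩ := exists_mem_notMem_of_injOn (hχ.mono hT'T)
    ((hc.injOn_color_add_one hij hcol hagree hij₂).mono hT'T) S (by omega)
  obtain ⟨hBT, hBA⟩ := mem_filter.1 hB
  simp only [S, mem_insert, not_or] at hχB hβB
  refine hnr (hasRainbowCopy_splice hij hij₂ (hagree A hA B hBT) hBA hij₁ (hcol B hBT)
    (hT A hA).2 ?_ ?_)
  · have hαχ := hc.color_ne_add_one A (i - 1)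
    rw [sub_add_cancel] at hαχ
    have hχβ : c (cycleEdge B i) ≠ c (cycleEdge B (j + 1)) :=
      hcol B hBT ▸ hc.color_ne_add_one B j
    simp only [List.nodup_cons, List.mem_cons, List.not_mem_nil, or_false, not_or,
      List.nodup_nil, and_true, not_false_eq_true]
    exact ⟨⟨hαχ, Ne.symm hχB.1, Ne.symm hβB.1⟩, ⟨Ne.symm hχB.2.1, Ne.symm hβB.2.1⟩, hχβ⟩
  · intro x hx hmem
    have hx_FC := hFC A hA x hx
    simp only [List.mem_cons, List.not_mem_nil, or_false] at hmem
    rcases hmem with h | h | h | h <;> rw [h] at hx_FC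
    exacts [hαA hx_FC, hχA hx_FC, hχB.2.2 hx_FC, hβB.2.2 hx_FC]

section Count

variable [Fintype V] (hc : IsProperEdgeColoring G c)
  (hnr : ¬HasRainbowCopy G c (cycleGraph (m + 5)))
include hc hnr

theorem card_le_of_color_eq {i j : Fin (m + 5)} (hij : i ≠ j) (hij₁ : i ≠ j + 1)
    (hij₂ : i ≠ j + 2) {T : Finset (Copy (cycleGraph (m + 5)) G)}
    (hT : ∀ f ∈ T, c (cycleEdge f i) = c (cycleEdge f j)) :
    #T ≤ (2 * (m + 5) + 5 + (m + 5) ^ 2) * Fintype.card V ^ (m + 3) := by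
  classical
  rw [← card_filter_add_card_filter_not
    (fun f => Set.InjOn (fun x => c (cycleEdge f x)) (frame i j)), add_mul]
  refine add_le_add ?_ ?_
  · simpa using card_le_mul_pow_of_eqOn hij₁ _ _ fun S hS hS' =>
      hc.card_le_of_eqOn hnr hij hij₁ hij₂
        (fun f hf => ⟨hT f (filter_subset _ _ (hS hf)), (mem_filter.1 (hS hf)).2⟩) hS'
  set P := (univ : Finset (Fin (m + 5) × Fin (m + 5))).filter
    fun ab => ab.1 ∈ frame i j ∧ ab.2 ∈ frame i j ∧ ab.1 ≠ ab.2
  have hcover : T.filter (fun f => ¬Set.InjOn (fun x => c (cycleEdge f x)) (frame i j)) ⊆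
      P.biUnion fun ab => T.filter fun f =>
        c (cycleEdge f i) = c (cycleEdge f j) ∧ c (cycleEdge f ab.1) = c (cycleEdge f ab.2) := by
    intro f hf
    obtain ⟨hfT, hf⟩ := mem_filter.1 hf
    simp only [Set.InjOn, not_forall] at hf
    obtain ⟨a, ha, b, hb, hab, hne⟩ := hf
    exact mem_biUnion.2 ⟨(a, b), mem_filter.2 ⟨mem_univ _, ha, hb, hne⟩,
      mem_filter.2 ⟨hfT, hT f hfT, hab⟩⟩
  refine (card_le_card hcover).trans
    ((card_biUnion_le_card_mul _ _ (1 * Fintype.card V ^ (m + 3)) ?_).trans ?_)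
  · rintro ⟨a, b⟩ hab
    obtain ⟨ha, hb, hne⟩ := (mem_filter.1 hab).2
    have hjb : j + 1 ≠ b + 1 := (add_left_injective 1).ne (mem_frame_iff.1 hb).2.2.1.symm
    simpa using card_le_mul_pow_of_eqOn hjb _ 1 fun S hS hS' => card_le_one.2 fun f hf f' hf' =>
      hc.eq_of_eqOn_of_color_eq hij hij₁ ha hb hne (mem_filter.1 (hS hf)).2
        (mem_filter.1 (hS hf')).2 (hS' f hf f' hf')
  · rw [one_mul]
    exact Nat.mul_le_mul_right _ ((card_filter_le _ _).trans_eq (by simp [sq]))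

theorem labelledCopyCount_cycleGraph_le :
    G.labelledCopyCount (cycleGraph (m + 5)) ≤
      (m + 5) ^ 2 * ((2 * (m + 5) + 5 + (m + 5) ^ 2) * Fintype.card V ^ (m + 3)) := by
  classical
  have hcard : G.labelledCopyCount (cycleGraph (m + 5)) =
      #(univ : Finset (Copy (cycleGraph (m + 5)) G)) := by
    rw [card_univ]
    unfold labelledCopyCount
    -- the two sides carry different `Fintype` instances
    convert rfl
  set P := (univ : Finset (Fin (m + 5) × Fin (m + 5))).filter
    fun ij => ij.1 ≠ ij.2 ∧ ij.1 ≠ ij.2 + 1 ∧ ij.1 ≠ ij.2 + 2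
  have hcover : (univ : Finset (Copy (cycleGraph (m + 5)) G)) ⊆
      P.biUnion fun ij => univ.filter fun f => c (cycleEdge f ij.1) = c (cycleEdge f ij.2) := by
    intro f _
    obtain ⟨i, j, hij, hij₁, hij₂, hcol⟩ := hc.exists_color_eq_of_not_hasRainbowCopy f hnr
    exact mem_biUnion.2 ⟨(i, j), mem_filter.2 ⟨mem_univ _, hij, hij₁, hij₂⟩,
      mem_filter.2 ⟨mem_univ _, hcol⟩⟩
  rw [hcard]
  refine (card_le_card hcover).trans ((card_biUnion_le_card_mul _ _
    ((2 * (m + 5) + 5 + (m + 5) ^ 2) * Fintype.card V ^ (m + 3)) fun ij hij => ?_).trans ?_)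
  · obtain ⟨hij, hij₁, hij₂⟩ := (mem_filter.1 hij).2
    exact hc.card_le_of_color_eq hnr hij hij₁ hij₂ fun f hf => (mem_filter.1 hf).2
  · exact Nat.mul_le_mul_right _ ((card_filter_le _ _).trans_eq (by simp [sq]))

end Count

end IsProperEdgeColoring

end CycleCopies

/-- Upper bound of Theorem 1.2 for odd cycles:
ex(n, C_{2k+1}, rainbow-C_{2k+1}) = O(n^{2k-1}). -/
theorem odd_cycle_rainbow_upper (k : ℕ) (hk : 2 ≤ k) :
    ∃ C : ℝ, ∀ (n : ℕ) (G : SimpleGraph (Fin n)) (β : Type*) (col : Sym2 (Fin n) → β),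
      IsProperEdgeColoring G col → ¬ HasRainbowCopy G col (cycleGraph (2 * k + 1)) →
      (_root_.copyCount G (cycleGraph (2 * k + 1)) : ℝ) ≤ C * (n : ℝ) ^ (2 * k - 1) := by
  obtain ⟨m, rfl⟩ : ∃ m, k = m + 2 := ⟨k - 2, by omega⟩
  refine ⟨((2 * m + 5) ^ 2 * (2 * (2 * m + 5) + 5 + (2 * m + 5) ^ 2) : ℕ),
    fun n G β col hc hnr => ?_⟩
  rw [show 2 * (m + 2) + 1 = 2 * m + 5 by ring] at hnr ⊢
  rw [show 2 * (m + 2) - 1 = 2 * m + 3 by omega]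
  have h := (_root_.copyCount_le_labelledCopyCount G _).trans
    (hc.labelledCopyCount_cycleGraph_le hnr)
  rw [Fintype.card_fin, ← mul_assoc] at h
  exact_mod_cast h
end
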